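/- arXiv:1803.05150 — 10 statements merged into one kernel-verified Lean document; each statement's English description precedes it below -/
import Mathlib

section
/- For all real numbers x ≥ -λ with λ ∈ [0,1) and x > -1, one has log(1+x) ≥ x + x²·(λ + log(1-λ))/λ². Equivalently: for λ ∈ (0,1) and y ≥ -λ, exp{y + (y/λ)²·(λ + log(1-λ))} ≤ 1 + y. -/
open Real

private lemma hasDerivAt_phi (c y : ℝ) (hy : (-1 : ℝ) < y) :
    HasDerivAt (fun x => c * x ^ 2 - x + Real.log (1 + x))
      (c * (2 * y) - 1 + (1 + y)⁻¹) y := by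
  have h1 : HasDerivAt (fun x : ℝ => c * x ^ 2) (c * (2 * y)) y := by
    simpa using (hasDerivAt_pow 2 y).const_mul c
  have h2 : HasDerivAt (fun x : ℝ => Real.log (1 + x)) (1 + y)⁻¹ y := by
    have := (Real.hasDerivAt_log (by linarith : (1:ℝ) + y ≠ 0)).comp y
      ((hasDerivAt_id y).const_add 1)
    simpa [Function.comp_def] using this
  exact (h1.sub (hasDerivAt_id y)).add h2

private lemma hasDerivAt_g (y : ℝ) (hy : y < 1) :
    HasDerivAt (fun x => -x - Real.log (1 - x) - x ^ 2 / 2)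
      (-1 + (1 - y)⁻¹ - y) y := by
  have h2 : HasDerivAt (fun x : ℝ => Real.log (1 - x)) (-(1 - y)⁻¹) y := by
    have h := (Real.hasDerivAt_log (by linarith : (1:ℝ) - y ≠ 0)).comp y
      (((hasDerivAt_id y).neg).const_add 1)
    simpa [Function.comp_def] using h
  have h3 : HasDerivAt (fun x : ℝ => x ^ 2 / 2) y y := by
    have := (hasDerivAt_pow 2 y).div_const 2
    simpa using this
  have : HasDerivAt (fun x => -x - Real.log (1 - x) - x ^ 2 / 2) (-1 - -(1 - y)⁻¹ - y) y :=
    (((hasDerivAt_id y).neg).sub h2).sub h3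
  convert this using 1
  ring

/-- `l^2/2 ≤ -l - log (1-l)` for `0 < l < 1`. -/
private lemma L1 (l : ℝ) (hl0 : 0 < l) (hl1 : l < 1) :
    l ^ 2 / 2 ≤ -l - Real.log (1 - l) := by
  set g : ℝ → ℝ := fun x => -x - Real.log (1 - x) - x ^ 2 / 2 with hg
  have hmono : MonotoneOn g (Set.Icc (0:ℝ) l) := by
    apply monotoneOn_of_hasDerivWithinAt_nonneg (f' := fun x =>
        -1 + (1 - x)⁻¹ - x) (convex_Icc _ _)
    · intro x hx
      exact (hasDerivAt_g x (by linarith [hx.2])).continuousAt.continuousWithinAt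
    · intro x hx
      rw [interior_Icc] at hx
      exact (hasDerivAt_g x (by linarith [hx.2])).hasDerivWithinAt
    · intro x hx
      rw [interior_Icc] at hx
      obtain ⟨hx0, hxl⟩ := hx
      have h1x : (0:ℝ) < 1 - x := by linarith
      have hinv : (1 - x) * (1 - x)⁻¹ = 1 := mul_inv_cancel₀ (ne_of_gt h1x)
      nlinarith [inv_pos.2 h1x, sq_nonneg x, hinv]
  have h0 : g 0 = 0 := by simp [hg]
  have := hmono (Set.left_mem_Icc.2 hl0.le) (Set.mem_Icc.2 ⟨hl0.le, le_refl l⟩) hl0.le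
  rw [h0] at this
  simp only [hg] at this
  linarith

/-- `-l - log (1-l) ≤ l^2/(2(1-l))` for `0 < l < 1`. -/
private lemma L2 (l : ℝ) (hl0 : 0 < l) (hl1 : l < 1) :
    -l - Real.log (1 - l) ≤ l ^ 2 / (2 * (1 - l)) := by
  have h1l : (0:ℝ) < 1 - l := by linarith
  set u : ℝ := l * (2 - l) / (2 * (1 - l)) with hu_def
  have hu : 0 < u := by
    apply div_pos (by nlinarith) (by linarith)
  have hq : 1 + u + u ^ 2 / 2 ≤ Real.exp u := Real.quadratic_le_exp_of_nonneg hu.le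
  have hkey : 1 ≤ (1 - l) * (1 + u + u ^ 2 / 2) := by
    have e1 : (1 - l) * (1 + u) = 1 - l ^ 2 / 2 := by
      rw [hu_def]; field_simp; ring
    have e2 : l ^ 2 / 2 ≤ (1 - l) * (u ^ 2 / 2) := by
      rw [hu_def, div_pow, div_div, ← mul_div_assoc, le_div_iff₀ (by positivity)]
      nlinarith [mul_nonneg (mul_nonneg (sq_nonneg l) (sq_nonneg l)) h1l.le]
    have e3 : (1 - l) * (1 + u + u ^ 2 / 2) = (1 - l) * (1 + u) + (1 - l) * (u ^ 2 / 2) := by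
      ring
    linarith
  have hexp : Real.exp (-u) ≤ 1 - l := by
    have hpos : (0:ℝ) < 1 + u + u ^ 2 / 2 := by positivity
    have h3 : Real.exp (-u) * (1 + u + u ^ 2 / 2) ≤ 1 := by
      calc Real.exp (-u) * (1 + u + u ^ 2 / 2) ≤ Real.exp (-u) * Real.exp u :=
            mul_le_mul_of_nonneg_left hq (Real.exp_pos _).le
        _ = 1 := by rw [← Real.exp_add]; simp
    have h4 : Real.exp (-u) * (1 + u + u ^ 2 / 2) ≤ (1 - l) * (1 + u + u ^ 2 / 2) :=
      h3.trans hkey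
    exact le_of_mul_le_mul_right (by linarith [h4]) hpos
  have hlog : -u ≤ Real.log (1 - l) := (Real.le_log_iff_exp_le h1l).2 hexp
  have huval : u - l = l ^ 2 / (2 * (1 - l)) := by
    rw [hu_def]; field_simp; ring
  linarith

/-- For `λ ∈ (0,1)` and `y ≥ -λ`, one has
`exp{y + (y/λ)² (λ + log(1-λ))} ≤ 1 + y`. -/
theorem exp_le_one_add_of_ge_neg_lambda (l y : ℝ) (hl0 : 0 < l) (hl1 : l < 1)
    (hy : -l ≤ y) :
    Real.exp (y + (y / l) ^ 2 * (l + Real.log (1 - l))) ≤ 1 + y := by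
  have h1l : (0:ℝ) < 1 - l := by linarith
  have hy1 : (-1:ℝ) < y := by linarith
  have h1y : (0:ℝ) < 1 + y := by linarith
  set K : ℝ := -l - Real.log (1 - l) with hK
  have hl2 : (0:ℝ) < l ^ 2 := by positivity
  have hK1 : l ^ 2 / 2 ≤ K := L1 l hl0 hl1
  have hK2 : K ≤ l ^ 2 / (2 * (1 - l)) := L2 l hl0 hl1
  have hK0 : 0 < K := lt_of_lt_of_le (by positivity) hK1
  set m : ℝ := l ^ 2 / (2 * K) with hm
  have hm0 : 0 < m := by positivity
  have hm1 : m ≤ 1 := by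
    rw [hm, div_le_one (by positivity)]; linarith
  have hml : 1 - l ≤ m := by
    rw [hm, le_div_iff₀ (by positivity)]
    rw [le_div_iff₀ (by positivity)] at hK2
    nlinarith
  set c : ℝ := K / l ^ 2 with hc
  have hcm : c = 1 / (2 * m) := by
    rw [hc, hm]; field_simp
  set F : ℝ → ℝ := fun x => c * x ^ 2 - x + Real.log (1 + x) with hF
  have hderiv : ∀ x : ℝ, -1 < x →
      c * (2 * x) - 1 + (1 + x)⁻¹ = x * (1 + x - m) / (m * (1 + x)) := by
    intro x hx
    have h1x : (0:ℝ) < 1 + x := by linarith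
    rw [hcm]
    field_simp
    ring
  have hFl : F (-l) = 0 := by
    simp only [hF, hc, hK]
    have h : 1 + -l = 1 - l := by ring
    rw [h]
    field_simp
    ring
  have hF0 : F 0 = 0 := by simp [hF]
  have hmain : 0 ≤ F y := by
    rcases le_or_gt y (m - 1) with hcase | hcase
    · -- y ∈ [-l, m-1] : F monotone on [-l, m-1], F (-l) = 0
      have hmono : MonotoneOn F (Set.Icc (-l) (m - 1)) := by
        apply monotoneOn_of_hasDerivWithinAt_nonneg (f' := fun x =>
            c * (2 * x) - 1 + (1 + x)⁻¹) (convex_Icc _ _)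
        · intro x hx
          exact (hasDerivAt_phi c x (by linarith [hx.1])).continuousAt.continuousWithinAt
        · intro x hx
          rw [interior_Icc] at hx
          exact (hasDerivAt_phi c x (by linarith [hx.1])).hasDerivWithinAt
        · intro x hx
          rw [interior_Icc] at hx
          have hx1 : (-1:ℝ) < x := by linarith [hx.1]
          rw [hderiv x hx1]
          have h1x : (0:ℝ) < 1 + x := by linarith
          have hnum : 0 ≤ x * (1 + x - m) := by
            have hxle : x ≤ 0 := by linarith [hx.2, hm1]
            have h2 : 1 + x - m ≤ 0 := by linarith [hx.2]
            nlinarith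
          positivity
      have := hmono (Set.mem_Icc.2 ⟨le_refl _, by linarith⟩)
        (Set.mem_Icc.2 ⟨hy, hcase⟩) hy
      rw [hFl] at this
      exact this
    · rcases le_or_gt y 0 with hcase2 | hcase2
      · -- y ∈ [m-1, 0] : F antitone, F 0 = 0
        have hanti : AntitoneOn F (Set.Icc (m - 1) (0:ℝ)) := by
          apply antitoneOn_of_hasDerivWithinAt_nonpos (f' := fun x =>
              c * (2 * x) - 1 + (1 + x)⁻¹) (convex_Icc _ _)
          · intro x hx
            exact (hasDerivAt_phi c x (by linarith [hx.1])).continuousAt.continuousWithinAt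
          · intro x hx
            rw [interior_Icc] at hx
            exact (hasDerivAt_phi c x (by linarith [hx.1])).hasDerivWithinAt
          · intro x hx
            rw [interior_Icc] at hx
            have hx1 : (-1:ℝ) < x := by linarith [hx.1]
            rw [hderiv x hx1]
            have h1x : (0:ℝ) < 1 + x := by linarith
            have hnum : x * (1 + x - m) ≤ 0 := by
              have hxle : x ≤ 0 := (hx.2).le
              have h2 : 0 ≤ 1 + x - m := by linarith [hx.1]
              exact mul_nonpos_of_nonpos_of_nonneg hxle h2
            exact div_nonpos_of_nonpos_of_nonneg hnum (by positivity)
        have := hanti (Set.mem_Icc.2 ⟨hcase.le, hcase2⟩)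
          (Set.mem_Icc.2 ⟨by linarith, le_refl _⟩) hcase2
        rw [hF0] at this
        exact this
      · -- y ≥ 0 : F monotone on [0, y], F 0 = 0
        have hmono : MonotoneOn F (Set.Icc (0:ℝ) y) := by
          apply monotoneOn_of_hasDerivWithinAt_nonneg (f' := fun x =>
              c * (2 * x) - 1 + (1 + x)⁻¹) (convex_Icc _ _)
          · intro x hx
            exact (hasDerivAt_phi c x (by linarith [hx.1])).continuousAt.continuousWithinAt
          · intro x hx
            rw [interior_Icc] at hx
            exact (hasDerivAt_phi c x (by linarith [hx.1])).hasDerivWithinAt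
          · intro x hx
            rw [interior_Icc] at hx
            have hx1 : (-1:ℝ) < x := by linarith [hx.1]
            rw [hderiv x hx1]
            have h1x : (0:ℝ) < 1 + x := by linarith
            have hnum : 0 ≤ x * (1 + x - m) := by
              have hx0 : 0 ≤ x := (hx.1).le
              have h2 : 0 ≤ 1 + x - m := by linarith
              exact mul_nonneg hx0 h2
            positivity
        have := hmono (Set.mem_Icc.2 ⟨le_refl _, hcase2.le⟩)
          (Set.mem_Icc.2 ⟨hcase2.le, le_refl _⟩) hcase2.le
        rw [hF0] at this
        exact this
  have harg : y + (y / l) ^ 2 * (l + Real.log (1 - l)) ≤ Real.log (1 + y) := by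
    have hid : (y / l) ^ 2 * (l + Real.log (1 - l)) = -(c * y ^ 2) := by
      rw [hc, hK]; field_simp; ring
    rw [hid]
    have hFy : F y = c * y ^ 2 - y + Real.log (1 + y) := rfl
    linarith [hmain]
  calc Real.exp (y + (y / l) ^ 2 * (l + Real.log (1 - l)))
      ≤ Real.exp (Real.log (1 + y)) := Real.exp_le_exp.2 harg
    _ = 1 + y := Real.exp_log h1y
end

section
/- For all real λ ∈ [0,3), exp(λ) - 1 - λ ≤ λ²/(2(1 - λ/3)). -/
open Real

lemma two_mul_three_pow_le_factorial (n : ℕ) : 2 * 3 ^ n ≤ (n + 2).factorial := by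
  induction n with
  | zero => simp [Nat.factorial]
  | succ n ih =>
    have : (n + 3).factorial = (n + 3) * (n + 2).factorial := rfl
    calc 2 * 3 ^ (n + 1) = 3 * (2 * 3 ^ n) := by ring
    _ ≤ 3 * (n + 2).factorial := by exact Nat.mul_le_mul_left 3 ih
    _ ≤ (n + 3) * (n + 2).factorial := Nat.mul_le_mul_right _ (by omega)
    _ = (n + 3).factorial := rfl

/-- For all `λ ∈ [0,3)`, `exp(λ) - 1 - λ ≤ λ²/(2(1 - λ/3))`. -/
theorem exp_sub_one_sub_le (l : ℝ) (hl0 : 0 ≤ l) (hl3 : l < 3) :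
    Real.exp l - 1 - l ≤ l ^ 2 / (2 * (1 - l / 3)) := by
  have hr0 : (0:ℝ) ≤ l / 3 := by linarith
  have hr1 : l / 3 < 1 := by linarith
  have hsum : Summable (fun n : ℕ => l ^ n / n.factorial) :=
    Real.summable_pow_div_factorial l
  have hexp : Real.exp l = ∑' n : ℕ, l ^ n / n.factorial := by
    rw [Real.exp_eq_exp_ℝ, NormedSpace.exp_eq_tsum_div]
  have hsplit := (Summable.sum_add_tsum_nat_add 2 hsum).symm
  have hfin : ∑ i ∈ Finset.range 2, l ^ i / i.factorial = 1 + l := by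
    simp [Finset.sum_range_succ, Nat.factorial]
  have hgeom : Summable (fun n : ℕ => l ^ 2 / 2 * (l / 3) ^ n) :=
    (summable_geometric_of_lt_one hr0 hr1).mul_left _
  have hle : ∀ n : ℕ, l ^ (n + 2) / (n + 2).factorial ≤ l ^ 2 / 2 * (l / 3) ^ n := by
    intro n
    have h1 : (2 * 3 ^ n : ℝ) ≤ ((n + 2).factorial : ℝ) := by
      exact_mod_cast two_mul_three_pow_le_factorial n
    have h2 : (0:ℝ) < 2 * 3 ^ n := by positivity
    have hln : 0 ≤ l ^ (n + 2) := by positivity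
    have : l ^ (n + 2) / (n + 2).factorial ≤ l ^ (n + 2) / (2 * 3 ^ n) :=
      div_le_div_of_nonneg_left hln h2 h1
    refine this.trans (le_of_eq ?_)
    rw [div_pow, pow_add]
    ring
  have htail : ∑' n : ℕ, l ^ (n + 2) / (n + 2).factorial
      ≤ ∑' n : ℕ, l ^ 2 / 2 * (l / 3) ^ n := by
    refine Summable.tsum_le_tsum hle ?_ hgeom
    exact (summable_nat_add_iff 2).mpr hsum
  have hgval : ∑' n : ℕ, l ^ 2 / 2 * (l / 3) ^ n = l ^ 2 / (2 * (1 - l / 3)) := by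
    rw [tsum_mul_left, tsum_geometric_of_lt_one hr0 hr1]
    field_simp
  calc Real.exp l - 1 - l
      = ∑' n : ℕ, l ^ (n + 2) / (n + 2).factorial := by
        rw [hexp, hsplit, hfin]; ring
    _ ≤ l ^ 2 / (2 * (1 - l / 3)) := hgval ▸ htail
end

section
/- For all real x ≥ 0, (1+x)·log(1+x) - x ≥ x²/(1 + x/3 + √(1 + 2x/3)). -/
open Real

private lemma lemA {s : ℝ} (hs : 1 < s) :
    3 - 3 / s < Real.log ((3 * s ^ 2 - 1) / 2) := by
  set g : ℝ → ℝ := fun t => Real.log ((3 * t ^ 2 - 1) / 2) + 3 / t with hg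
  have key : StrictMonoOn g (Set.Ici 1) := by
    apply strictMonoOn_of_deriv_pos (convex_Ici 1)
    · apply ContinuousOn.add
      · apply ContinuousOn.log (by fun_prop)
        intro t ht
        simp only [Set.mem_Ici] at ht
        nlinarith
      · apply ContinuousOn.div continuousOn_const continuousOn_id
        intro t ht
        simp only [Set.mem_Ici] at ht
        simp only [id_eq]
        intro h
        linarith
    · intro t ht
      rw [interior_Ici] at ht
      have ht1 : 1 < t := ht
      have ht0 : 0 < t := by linarith
      have hden : (0:ℝ) < 3 * t ^ 2 - 1 := by nlinarith
      have h1 : HasDerivAt (fun t : ℝ => (3 * t ^ 2 - 1) / 2) (3 * t) t := by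
        have := (((hasDerivAt_pow 2 t).const_mul 3).sub_const 1).div_const 2
        convert this using 1
        · rfl
        · rfl
        ring
      have hlog : HasDerivAt (fun t : ℝ => Real.log ((3 * t ^ 2 - 1) / 2))
          ((3 * t) / ((3 * t ^ 2 - 1) / 2)) t := h1.log (by positivity)
      have hinv : HasDerivAt (fun t : ℝ => 3 / t) (3 * (-(t ^ 2)⁻¹)) t := by
        simpa [div_eq_mul_inv] using (hasDerivAt_inv ht0.ne').const_mul 3
      have hgd : HasDerivAt g ((3 * t) / ((3 * t ^ 2 - 1) / 2) + 3 * (-(t ^ 2)⁻¹)) t :=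
        hlog.add hinv
      rw [hgd.deriv]
      have heq : (3 * t) / ((3 * t ^ 2 - 1) / 2) + 3 * (-(t ^ 2)⁻¹)
          = (3 * (t - 1) ^ 2 * (2 * t + 1)) / ((3 * t ^ 2 - 1) * t ^ 2) := by
        field_simp
        ring
      rw [heq]
      apply div_pos (by nlinarith) (by nlinarith)
  have h := key (Set.mem_Ici.mpr le_rfl) (Set.mem_Ici.mpr hs.le) hs
  have hg1 : g 1 = 3 := by
    simp only [hg]
    norm_num
  rw [hg1] at h
  simp only [hg] at h
  linarith

private lemma lemB {x : ℝ} (hx : 0 ≤ x) :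
    (1 + x) * Real.log (1 + x) - 4 * x + 9 * Real.sqrt (1 + 2 * x / 3) ≥ 9 := by
  set f : ℝ → ℝ := fun y => (1 + y) * Real.log (1 + y) - 4 * y + 9 * Real.sqrt (1 + 2 * y / 3)
    with hf
  have key : StrictMonoOn f (Set.Ici 0) := by
    apply strictMonoOn_of_deriv_pos (convex_Ici 0)
    · apply ContinuousOn.add
      · apply ContinuousOn.sub
        · apply ContinuousOn.mul (by fun_prop)
          apply ContinuousOn.log (by fun_prop)
          intro t ht
          simp only [Set.mem_Ici] at ht
          linarith
        · fun_prop
      · fun_prop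
    · intro t ht
      rw [interior_Ici] at ht
      have ht0 : 0 < t := ht
      have hu : (0:ℝ) < 1 + 2 * t / 3 := by linarith
      set s := Real.sqrt (1 + 2 * t / 3) with hsdef
      have hsnn : 0 ≤ s := Real.sqrt_nonneg _
      have hs2 : s ^ 2 = 1 + 2 * t / 3 := Real.sq_sqrt hu.le
      have hs1 : 1 < s := by nlinarith
      have hs0 : 0 < s := by linarith
      have hA : HasDerivAt (fun y : ℝ => 1 + y) 1 t := by
        simpa using (hasDerivAt_id t).const_add 1
      have hlog : HasDerivAt (fun y : ℝ => Real.log (1 + y)) (1 / (1 + t)) t := by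
        have := hA.log (by linarith : (1:ℝ) + t ≠ 0)
        simpa using this
      have hmul : HasDerivAt (fun y : ℝ => (1 + y) * Real.log (1 + y))
          (1 * Real.log (1 + t) + (1 + t) * (1 / (1 + t))) t := hA.mul hlog
      have hin : HasDerivAt (fun y : ℝ => 1 + 2 * y / 3) (2 / 3) t := by
        have : HasDerivAt (fun y : ℝ => 2 * y / 3) (2 / 3) t := by
          simpa using ((hasDerivAt_id t).const_mul 2).div_const 3
        simpa using this.const_add 1
      have hsq : HasDerivAt (fun y : ℝ => Real.sqrt (1 + 2 * y / 3)) (1 / (3 * s)) t := by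
        have h := (Real.hasDerivAt_sqrt hu.ne').comp t hin
        convert h using 1
        · rfl
        · rfl
        · rfl
        rw [← hsdef]
        field_simp
      have h4 : HasDerivAt (fun y : ℝ => 4 * y) 4 t := by
        simpa using (hasDerivAt_id t).const_mul 4
      have hfd : HasDerivAt f
          ((1 * Real.log (1 + t) + (1 + t) * (1 / (1 + t)) - 4) + 9 * (1 / (3 * s))) t :=
        (hmul.sub h4).add (hsq.const_mul 9)
      rw [hfd.deriv]
      have h13 : (1:ℝ) + t = (3 * s ^ 2 - 1) / 2 := by rw [hs2]; ring
      have hA2 := lemA hs1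
      rw [← h13] at hA2
      have h1t : (1 + t) * (1 / (1 + t)) = 1 := by
        have : (1:ℝ) + t ≠ 0 := by linarith
        field_simp
      have h9 : 9 * (1 / (3 * s)) = 3 / s := by
        field_simp
        ring
      rw [h1t, h9, one_mul]
      linarith
  have hf0 : f 0 = 9 := by
    simp only [hf]
    norm_num
  rcases eq_or_lt_of_le hx with h | h
  · rw [← h]
    norm_num
  · have hk := key (Set.mem_Ici.mpr le_rfl) (Set.mem_Ici.mpr hx) h
    rw [hf0] at hk
    simpa only [hf] using hk.le

/-- For `x ≥ 0`, `(1+x)log(1+x) - x ≥ x²/(1 + x/3 + √(1 + 2x/3))`. -/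
theorem one_add_mul_log_sub_ge_sqrt (x : ℝ) (hx : 0 ≤ x) :
    (1 + x) * Real.log (1 + x) - x ≥
      x ^ 2 / (1 + x / 3 + Real.sqrt (1 + 2 * x / 3)) := by
  have hu : (0:ℝ) < 1 + 2 * x / 3 := by linarith
  set B := Real.sqrt (1 + 2 * x / 3) with hB
  have hB0 : 0 < B := Real.sqrt_pos.mpr hu
  have hB2 : B ^ 2 = 1 + 2 * x / 3 := Real.sq_sqrt hu.le
  have hD : (0:ℝ) < 1 + x / 3 + B := by linarith
  have hratio : x ^ 2 / (1 + x / 3 + B) = 3 * x + 9 - 9 * B := by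
    rw [div_eq_iff hD.ne']
    nlinarith [hB2]
  rw [hratio]
  have := lemB hx
  linarith
end

section
/- For all real x ≥ 0, (1+x)·log(1+x) - x ≥ x²/(2(1 + x/3)). -/
open Real

lemma aux_log_ge (x : ℝ) (hx : 0 ≤ x) :
    3 * x * (x + 6) / (2 * (x + 3) ^ 2) ≤ Real.log (1 + x) := by
  set f : ℝ → ℝ := fun t => Real.log (1 + t) - 3 * t * (t + 6) / (2 * (t + 3) ^ 2) with hf
  have hderiv : ∀ t : ℝ, 0 ≤ t → HasDerivAt f (1 / (1 + t) - 27 / (t + 3) ^ 3) t := by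
    intro t ht
    have h1 : (1 : ℝ) + t > 0 := by linarith
    have h3 : (2 : ℝ) * (t + 3) ^ 2 ≠ 0 := by positivity
    have hlog : HasDerivAt (fun s : ℝ => Real.log (1 + s)) (1 / (1 + t)) t := by
      have := ((hasDerivAt_id t).const_add 1).log (by linarith : (1:ℝ) + t ≠ 0)
      simpa using this
    have hN : HasDerivAt (fun s : ℝ => 3 * s * (s + 6)) (6 * t + 18) t := by
      have := (((hasDerivAt_id t).const_mul 3).mul ((hasDerivAt_id t).add_const 6))
      refine this.congr_deriv ?_
      simp [id]
      ring
    have hD : HasDerivAt (fun s : ℝ => 2 * (s + 3) ^ 2) (4 * (t + 3)) t := by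
      have := (((hasDerivAt_id t).add_const 3).pow 2).const_mul 2
      refine this.congr_deriv ?_
      simp [id]
      ring
    have hrat := hN.div hD h3
    have := hlog.sub hrat
    refine this.congr_deriv ?_
    have h4 : (t : ℝ) + 3 ≠ 0 := by linarith
    field_simp
    ring
  have hcont : ContinuousOn f (Set.Ici 0) := fun t ht =>
    (hderiv t ht).continuousAt.continuousWithinAt
  have hdiff : ∀ t ∈ interior (Set.Ici (0:ℝ)), HasDerivAt f (1 / (1 + t) - 27 / (t + 3) ^ 3) t := by
    intro t ht
    rw [interior_Ici] at ht
    exact hderiv t (le_of_lt ht)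
  have hmono : MonotoneOn f (Set.Ici 0) := by
    apply monotoneOn_of_deriv_nonneg (convex_Ici 0) hcont
    · intro t ht
      exact (hdiff t ht).differentiableAt.differentiableWithinAt
    · intro t ht
      rw [(hdiff t ht).deriv]
      rw [interior_Ici] at ht
      have ht' : (0:ℝ) < t := ht
      have h1 : (0:ℝ) < 1 + t := by linarith
      have h2 : (0:ℝ) < (t + 3) ^ 3 := by positivity
      rw [sub_nonneg, div_le_div_iff₀ h2 h1]
      nlinarith [sq_nonneg t, pow_pos (by linarith : (0:ℝ) < t) 3]
  have h0 : f 0 = 0 := by simp [hf]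
  have := hmono (Set.self_mem_Ici) (Set.mem_Ici.mpr hx) hx
  rw [h0] at this
  simp only [hf] at this
  linarith

/-- Bennett–Bernstein comparison: for `x ≥ 0`,
`(1+x)log(1+x) - x ≥ x²/(2(1 + x/3))`. -/
theorem one_add_mul_log_sub_ge (x : ℝ) (hx : 0 ≤ x) :
    (1 + x) * Real.log (1 + x) - x ≥ x ^ 2 / (2 * (1 + x / 3)) := by
  set g : ℝ → ℝ := fun t => (1 + t) * Real.log (1 + t) - t - t ^ 2 / (2 * (1 + t / 3)) with hg
  have hderiv : ∀ t : ℝ, 0 ≤ t →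
      HasDerivAt g (Real.log (1 + t) - 3 * t * (t + 6) / (2 * (t + 3) ^ 2)) t := by
    intro t ht
    have h1 : (1 : ℝ) + t > 0 := by linarith
    have h1' : (1 : ℝ) + t ≠ 0 := ne_of_gt h1
    have hlog : HasDerivAt (fun s : ℝ => Real.log (1 + s)) (1 / (1 + t)) t := by
      have := ((hasDerivAt_id t).const_add 1).log h1'
      simpa using this
    have hmul : HasDerivAt (fun s : ℝ => (1 + s) * Real.log (1 + s))
        (1 * Real.log (1 + t) + (1 + t) * (1 / (1 + t))) t :=
      ((hasDerivAt_id t).const_add 1).mul hlog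
    have hN : HasDerivAt (fun s : ℝ => s ^ 2) (2 * t) t := by
      simpa using (hasDerivAt_pow 2 t)
    have hD : HasDerivAt (fun s : ℝ => 2 * (1 + s / 3)) (2 / 3) t := by
      have := (((hasDerivAt_id t).div_const 3).const_add 1).const_mul 2
      refine this.congr_deriv ?_
      ring
    have hD0 : (2 : ℝ) * (1 + t / 3) ≠ 0 := by positivity
    have hrat := hN.div hD hD0
    have := (hmul.sub (hasDerivAt_id t)).sub hrat
    refine this.congr_deriv ?_
    have h3 : (t : ℝ) + 3 ≠ 0 := by linarith
    field_simp
    ring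
  have hcont : ContinuousOn g (Set.Ici 0) := fun t ht =>
    (hderiv t ht).continuousAt.continuousWithinAt
  have hdiff : ∀ t ∈ interior (Set.Ici (0:ℝ)),
      HasDerivAt g (Real.log (1 + t) - 3 * t * (t + 6) / (2 * (t + 3) ^ 2)) t := by
    intro t ht
    rw [interior_Ici] at ht
    exact hderiv t (le_of_lt ht)
  have hmono : MonotoneOn g (Set.Ici 0) := by
    apply monotoneOn_of_deriv_nonneg (convex_Ici 0) hcont
    · intro t ht
      exact (hdiff t ht).differentiableAt.differentiableWithinAt
    · intro t ht
      rw [(hdiff t ht).deriv]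
      rw [interior_Ici] at ht
      have := aux_log_ge t (le_of_lt ht)
      linarith
  have h0 : g 0 = 0 := by simp [hg]
  have := hmono (Set.self_mem_Ici) (Set.mem_Ici.mpr hx) hx
  rw [h0] at this
  simp only [hg] at this
  linarith
end

section
/- Let ξ be a real random variable with ξ ≥ -1 and E[ξ] = 0. Then for every λ ∈ [0,1), E[exp{λξ + (λ + log(1-λ))·ξ²}] ≤ 1. -/
open MeasureTheory Real

-- log(1-l) ≤ -l - l^2/2 for 0 ≤ l < 1
lemma log_one_sub_le {l : ℝ} (hl0 : 0 ≤ l) (hl1 : l < 1) :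
    Real.log (1 - l) ≤ -l - l^2/2 := by
  set f : ℝ → ℝ := fun t => Real.log (1 - t) + t + t^2/2 with hf
  have hder : ∀ t ∈ Set.Ico (0:ℝ) 1, HasDerivAt f (-1/(1-t) + (1 + t)) t := by
    intro t ht
    have h1 : (0:ℝ) < 1 - t := by simp at ht; linarith [ht.2]
    have hlog : HasDerivAt (fun t : ℝ => Real.log (1 - t)) ((-1)/(1-t)) t := by
      have : HasDerivAt (fun t : ℝ => 1 - t) (-1) t := (hasDerivAt_id t).const_sub 1
      exact this.log h1.ne'
    have := (hlog.add (hasDerivAt_id t)).add ((hasDerivAt_pow 2 t).div_const 2)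
    refine this.congr_deriv ?_
    ring
  have hanti : AntitoneOn f (Set.Ico (0:ℝ) 1) := by
    apply antitoneOn_of_deriv_nonpos (convex_Ico 0 1)
    · intro t ht
      exact (hder t ht).continuousAt.continuousWithinAt
    · intro t ht
      rw [interior_Ico] at ht
      exact (hder t (Set.Ioo_subset_Ico_self ht)).differentiableAt.differentiableWithinAt
    · intro t ht
      rw [interior_Ico] at ht
      rw [(hder t (Set.Ioo_subset_Ico_self ht)).deriv]
      have h1 : (0:ℝ) < 1 - t := by linarith [ht.2]
      rw [div_add' _ _ _ h1.ne']
      apply div_nonpos_of_nonpos_of_nonneg _ h1.le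
      nlinarith [ht.1.le]
  have := hanti (Set.mem_Ico.2 ⟨le_refl 0, one_pos⟩) (Set.mem_Ico.2 ⟨hl0, hl1⟩) hl0
  simp [hf] at this
  linarith

lemma key_pointwise{l : ℝ} (hl0 : 0 ≤ l) (hl1 : l < 1) {x : ℝ} (hx : -1 ≤ x) :
    Real.exp (l * x + (l + Real.log (1 - l)) * x ^ 2) ≤ 1 + l * x := by
  rcases eq_or_lt_of_le hl0 with rfl | hl0'
  · simp
  set c : ℝ := l + Real.log (1 - l) with hc
  have hpos : ∀ t : ℝ, -1 ≤ t → 0 < 1 + l * t := by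
    intro t ht; nlinarith
  -- it suffices to show l*x + c*x^2 ≤ log (1 + l*x)
  suffices hs : l * x + c * x ^ 2 ≤ Real.log (1 + l * x) by
    calc Real.exp (l * x + c * x ^ 2) ≤ Real.exp (Real.log (1 + l * x)) :=
          Real.exp_le_exp.2 hs
      _ = 1 + l * x := Real.exp_log (hpos x hx)
  set h : ℝ → ℝ := fun t => Real.log (1 + l * t) - l * t - c * t ^ 2 with hh
  set q : ℝ → ℝ := fun t => l ^ 2 / (1 + l * t) + 2 * c with hq
  have hder : ∀ t : ℝ, -1 ≤ t → HasDerivAt h (-t * q t) t := by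
    intro t ht
    have h1 := hpos t ht
    have hlog : HasDerivAt (fun t : ℝ => Real.log (1 + l * t)) (l / (1 + l * t)) t := by
      have : HasDerivAt (fun t : ℝ => 1 + l * t) l t := by
        simpa using ((hasDerivAt_id t).const_mul l).const_add 1
      exact this.log h1.ne'
    have := (hlog.sub ((hasDerivAt_id t).const_mul l)).sub ((hasDerivAt_pow 2 t).const_mul c)
    refine this.congr_deriv ?_
    simp only [hq]
    field_simp
    ring
  have hqanti : ∀ s t : ℝ, -1 ≤ s → s ≤ t → q t ≤ q s := by
    intro s t hs hst
    have h1 := hpos s hs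
    have h2 := hpos t (hs.trans hst)
    simp only [hq]
    have : l ^ 2 / (1 + l * t) ≤ l ^ 2 / (1 + l * s) := by
      exact div_le_div_of_nonneg_left (by positivity) h1 (by nlinarith)
    linarith
  have hq0 : q 0 ≤ 0 := by
    have := log_one_sub_le hl0 hl1
    simp only [hq, hc]
    rw [mul_zero, add_zero, div_one]
    nlinarith
  have hcont : ∀ a b : ℝ, -1 ≤ a → ContinuousOn h (Set.Icc a b) ∧
      DifferentiableOn ℝ h (interior (Set.Icc a b)) := by
    intro a b ha
    constructor
    · intro t ht
      exact (hder t (ha.trans ht.1)).continuousAt.continuousWithinAt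
    · intro t ht
      rw [interior_Icc] at ht
      exact (hder t (ha.trans ht.1.le)).differentiableAt.differentiableWithinAt
  have hmono : ∀ a b : ℝ, -1 ≤ a → a ≤ b →
      (∀ t ∈ Set.Ioo a b, 0 ≤ -t * q t) → h a ≤ h b := by
    intro a b ha hab hd
    have := monotoneOn_of_deriv_nonneg (convex_Icc a b) (hcont a b ha).1 (hcont a b ha).2
      (fun t ht => by
        rw [interior_Icc] at ht
        rw [(hder t (ha.trans ht.1.le)).deriv]
        exact hd t ht)
    exact this (Set.mem_Icc.2 ⟨le_refl a, hab⟩) (Set.mem_Icc.2 ⟨hab, le_refl b⟩) hab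
  have hanti : ∀ a b : ℝ, -1 ≤ a → a ≤ b →
      (∀ t ∈ Set.Ioo a b, -t * q t ≤ 0) → h b ≤ h a := by
    intro a b ha hab hd
    have := antitoneOn_of_deriv_nonpos (convex_Icc a b) (hcont a b ha).1 (hcont a b ha).2
      (fun t ht => by
        rw [interior_Icc] at ht
        rw [(hder t (ha.trans ht.1.le)).deriv]
        exact hd t ht)
    exact this (Set.mem_Icc.2 ⟨le_refl a, hab⟩) (Set.mem_Icc.2 ⟨hab, le_refl b⟩) hab
  have h0 : h 0 = 0 := by simp [hh]
  have hm1 : h (-1) = 0 := by simp [hh, hc]; ring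
  have hnn : 0 ≤ h x := by
    rcases le_or_gt 0 x with hx0 | hx0
    · rw [← h0]
      apply hmono 0 x (by norm_num) hx0
      intro t ht
      have hqt : q t ≤ 0 := (hqanti 0 t (by norm_num) ht.1.le).trans hq0
      nlinarith [ht.1]
    · rcases le_or_gt 0 (q x) with hqx | hqx
      · rw [← hm1]
        apply hmono (-1) x (le_refl _) hx
        intro t ht
        have hqt : 0 ≤ q t := hqx.trans (hqanti t x (ht.1.le) ht.2.le)
        have : t < 0 := ht.2.trans hx0
        nlinarith
      · rw [← h0]
        apply hanti x 0 hx hx0.le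
        intro t ht
        have hqt : q t ≤ 0 := (hqanti x t hx ht.1.le).trans hqx.le
        nlinarith [ht.2]
  simp only [hh] at hnn
  linarith

/-- If `ξ ≥ -1` a.s. and `E[ξ] = 0`, then for every `λ ∈ [0,1)`,
`E[exp{λξ + (λ + log(1-λ))ξ²}] ≤ 1`. -/
theorem integral_exp_le_one {Ω : Type*} [MeasurableSpace Ω] (μ : Measure Ω)
    [IsProbabilityMeasure μ] (ξ : Ω → ℝ) (hξ2 : MemLp ξ 2 μ)
    (hbdd : ∀ᵐ ω ∂μ, -1 ≤ ξ ω) (hmean : ∫ ω, ξ ω ∂μ = 0)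
    (l : ℝ) (hl0 : 0 ≤ l) (hl1 : l < 1) :
    ∫ ω, Real.exp (l * ξ ω + (l + Real.log (1 - l)) * (ξ ω) ^ 2) ∂μ ≤ 1 := by
  have hintξ : Integrable ξ μ := hξ2.integrable one_le_two
  have hintg : Integrable (fun ω => 1 + l * ξ ω) μ :=
    (integrable_const 1).add (hintξ.const_mul l)
  have hkey : ∀ᵐ ω ∂μ, Real.exp (l * ξ ω + (l + Real.log (1 - l)) * (ξ ω) ^ 2) ≤ 1 + l * ξ ω :=
    hbdd.mono fun ω hω => key_pointwise hl0 hl1 hω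
  have hmeas : AEStronglyMeasurable
      (fun ω => Real.exp (l * ξ ω + (l + Real.log (1 - l)) * (ξ ω) ^ 2)) μ := by
    have a := hξ2.aestronglyMeasurable
    have a2 : AEStronglyMeasurable (fun ω => (l + Real.log (1 - l)) * (ξ ω) ^ 2) μ := by
      apply ((a.mul a).const_mul (l + Real.log (1 - l))).congr
      filter_upwards with ω
      simp [Pi.mul_apply, sq]
    exact Real.continuous_exp.comp_aestronglyMeasurable ((a.const_mul l).add a2)
  have hintf : Integrable
      (fun ω => Real.exp (l * ξ ω + (l + Real.log (1 - l)) * (ξ ω) ^ 2)) μ := by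
    apply hintg.mono' hmeas
    filter_upwards [hkey] with ω hω
    rw [Real.norm_eq_abs, abs_of_pos (Real.exp_pos _)]
    exact hω
  calc ∫ ω, Real.exp (l * ξ ω + (l + Real.log (1 - l)) * (ξ ω) ^ 2) ∂μ
      ≤ ∫ ω, (1 + l * ξ ω) ∂μ := integral_mono_ae hintf hintg hkey
    _ = 1 := by
        rw [integral_add (integrable_const 1) (hintξ.const_mul l), integral_const,
          integral_const_mul, hmean]
        simp
end

section
/- Let (ξ_i, F_i)_{i=1..n} be a martingale difference sequence with ξ_i ≥ -1 a.s. for all i. Let S_n = Σ_{i=1}^n ξ_i and [S]_n = Σ_{i=1}^n ξ_i². Then for every λ ∈ [0,1), the process U_k(λ) = exp{λ S_k + (λ + log(1-λ))[S]_k} is a supermartingale and E[U_n(λ)] ≤ 1. -/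
open MeasureTheory Real Finset

/-- log(1+y) ≥ y - y²/2 for y ≥ 0 -/
lemma aux_logA : ∀ y : ℝ, 0 ≤ y → y - y^2/2 ≤ Real.log (1+y) := by
  have hderiv : ∀ t : ℝ, 0 < 1 + t →
      HasDerivAt (fun t => Real.log (1+t) - t + t^2/2) (1/(1+t) - 1 + t) t := by
    intro t ht
    have h1 : HasDerivAt (fun t : ℝ => 1 + t) 1 t := (hasDerivAt_id t).const_add 1
    have h2 : HasDerivAt (fun t : ℝ => Real.log (1+t)) (1/(1+t)) t := by
      simpa [one_div, Function.comp_def] using (Real.hasDerivAt_log ht.ne').comp t h1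
    have h3 := ((h2.sub (hasDerivAt_id t)).add ((hasDerivAt_pow 2 t).div_const 2))
    refine h3.congr_deriv ?_
    simp
  have hmono : MonotoneOn (fun t => Real.log (1+t) - t + t^2/2) (Set.Ici 0) := by
    apply monotoneOn_of_deriv_nonneg (convex_Ici 0)
    · intro t ht
      exact ((hderiv t (by simp at ht; linarith)).differentiableAt).continuousAt.continuousWithinAt
    · intro t ht
      rw [interior_Ici] at ht
      exact ((hderiv t (by simp at ht ⊢; linarith)).differentiableAt).differentiableWithinAt
    · intro t ht
      rw [interior_Ici] at ht
      have ht' : (0:ℝ) < t := ht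
      rw [(hderiv t (by linarith)).deriv]
      have : 1/(1+t) - 1 + t = t^2/(1+t) := by field_simp; ring
      rw [this]; positivity
  intro y hy
  have := hmono (Set.self_mem_Ici) (Set.mem_Ici.mpr hy) hy
  simp at this
  linarith

/-- log(1-l) ≤ -l - l²/2 for l ∈ [0,1) -/
lemma aux_logB : ∀ l : ℝ, 0 ≤ l → l < 1 → l + Real.log (1-l) ≤ -l^2/2 := by
  have hderiv : ∀ t : ℝ, t < 1 →
      HasDerivAt (fun t => -t - t^2/2 - Real.log (1-t)) (-1 - t + 1/(1-t)) t := by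
    intro t ht
    have h0 : (0:ℝ) < 1 - t := by linarith
    have h1 : HasDerivAt (fun t : ℝ => 1 - t) (-1) t := by
      simpa using ((hasDerivAt_id t).const_sub 1)
    have h2 : HasDerivAt (fun t : ℝ => Real.log (1-t)) ((1-t)⁻¹ * (-1)) t :=
      (Real.hasDerivAt_log h0.ne').comp t h1
    have h3 := (((hasDerivAt_id t).neg.sub ((hasDerivAt_pow 2 t).div_const 2)).sub h2)
    refine h3.congr_deriv ?_
    field_simp
    push_cast
    ring
  have hmono : MonotoneOn (fun t => -t - t^2/2 - Real.log (1-t)) (Set.Ico 0 1) := by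
    apply monotoneOn_of_deriv_nonneg (convex_Ico 0 1)
    · intro t ht
      exact ((hderiv t ht.2).differentiableAt).continuousAt.continuousWithinAt
    · intro t ht
      rw [interior_Ico] at ht
      exact ((hderiv t ht.2).differentiableAt).differentiableWithinAt
    · intro t ht
      rw [interior_Ico] at ht
      rw [(hderiv t ht.2).deriv]
      have h0 : (0:ℝ) < 1 - t := by linarith [ht.2]
      have : -1 - t + 1/(1-t) = t^2/(1-t) := by field_simp; ring
      rw [this]; positivity
  intro l hl0 hl1
  have := hmono (Set.mem_Ico.mpr ⟨le_refl 0, one_pos⟩) (Set.mem_Ico.mpr ⟨hl0, hl1⟩) hl0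
  simp at this
  linarith

/-- -l²/(2(1-l)) ≤ l + log(1-l) for l ∈ [0,1) -/
lemma aux_logC : ∀ l : ℝ, 0 ≤ l → l < 1 → -l^2/(2*(1-l)) ≤ l + Real.log (1-l) := by
  have hderiv : ∀ t : ℝ, t < 1 →
      HasDerivAt (fun t => t + Real.log (1-t) + t^2/(2*(1-t)))
        (1 + (1-t)⁻¹ * (-1) + (2*t^1*(2*(1-t)) - t^2*(-2))/(2*(1-t))^2) t := by
    intro t ht
    have h0 : (0:ℝ) < 1 - t := by linarith
    have h1 : HasDerivAt (fun t : ℝ => 1 - t) (-1) t := by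
      simpa using ((hasDerivAt_id t).const_sub 1)
    have h2 : HasDerivAt (fun t : ℝ => Real.log (1-t)) ((1-t)⁻¹ * (-1)) t :=
      (Real.hasDerivAt_log h0.ne').comp t h1
    have h4 : HasDerivAt (fun t : ℝ => 2*(1-t)) (-2) t := by
      simpa using h1.const_mul 2
    have h5 : HasDerivAt (fun t : ℝ => t^2/(2*(1-t)))
        ((2*t^1*(2*(1-t)) - t^2*(-2))/(2*(1-t))^2) t :=
      (hasDerivAt_pow 2 t).div h4 (by positivity)
    exact ((hasDerivAt_id t).add h2).add h5
  have hmono : MonotoneOn (fun t => t + Real.log (1-t) + t^2/(2*(1-t))) (Set.Ico 0 1) := by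
    apply monotoneOn_of_deriv_nonneg (convex_Ico 0 1)
    · intro t ht
      exact ((hderiv t ht.2).differentiableAt).continuousAt.continuousWithinAt
    · intro t ht
      rw [interior_Ico] at ht
      exact ((hderiv t ht.2).differentiableAt).differentiableWithinAt
    · intro t ht
      rw [interior_Ico] at ht
      rw [(hderiv t ht.2).deriv]
      have h0 : (0:ℝ) < 1 - t := by linarith [ht.2]
      have : 1 + (1-t)⁻¹ * (-1) + (2*t^1*(2*(1-t)) - t^2*(-2))/(2*(1-t))^2
          = t^2/(2*(1-t)^2) := by field_simp; ring
      rw [this]; positivity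
  intro l hl0 hl1
  have := hmono (Set.mem_Ico.mpr ⟨le_refl 0, one_pos⟩) (Set.mem_Ico.mpr ⟨hl0, hl1⟩) hl0
  simp at this
  rw [neg_div]; linarith

/-- For l ∈ [0,1), x ∈ [-1,0]: l x + (l+log(1-l)) x² ≤ log(1+lx). -/
lemma aux_keyNeg (l : ℝ) (hl0 : 0 ≤ l) (hl1 : l < 1) (x : ℝ) (hx1 : -1 ≤ x) (hx0 : x ≤ 0) :
    l*x + (l + Real.log (1-l))*x^2 ≤ Real.log (1+l*x) := by
  set c : ℝ := l + Real.log (1-l) with hc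
  -- positivity of 1 + l t on [-1,0]
  have hpos : ∀ t : ℝ, -1 ≤ t → 0 < 1 + l*t := by
    intro t ht
    nlinarith
  set G : ℝ → ℝ := fun t => Real.log (1+l*t) - l*t - c*t^2 with hG
  have hderiv : ∀ t : ℝ, -1 ≤ t →
      HasDerivAt G ((-t) * (l^2/(1+l*t) + 2*c)) t := by
    intro t ht
    have h0 := hpos t ht
    have h1 : HasDerivAt (fun t : ℝ => 1 + l*t) l t := by
      simpa using ((hasDerivAt_id t).const_mul l).const_add 1
    have h2 : HasDerivAt (fun t : ℝ => Real.log (1+l*t)) ((1+l*t)⁻¹ * l) t := by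
      have := (Real.hasDerivAt_log h0.ne').comp t h1; exact this
    have h3 : HasDerivAt G ((1+l*t)⁻¹ * l - l - c*(2*t)) t := by
      have := (h2.sub (((hasDerivAt_id t).const_mul l))).sub ((hasDerivAt_pow 2 t).const_mul c)
      simpa [hG, Pi.sub_def] using this
    convert h3 using 1
    have h0' : 1 + t*l ≠ 0 := by rw [mul_comm]; exact h0.ne'
    field_simp
    ring
  have hG1 : G (-1) = 0 := by
    simp only [hG]
    have : 1 + l*(-1) = 1 - l := by ring
    rw [this, hc]; ring
  have hG0 : G 0 = 0 := by simp [hG]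
  -- the decreasing factor ψ
  have hpsi_mono : ∀ s t : ℝ, -1 ≤ s → s ≤ t →
      l^2/(1+l*t) + 2*c ≤ l^2/(1+l*s) + 2*c := by
    intro s t hs hst
    have h0 : 0 < 1 + l*s := hpos s hs
    have : l^2/(1+l*t) ≤ l^2/(1+l*s) := by
      apply div_le_div_of_nonneg_left (by positivity) h0 (by nlinarith)
    linarith
  have key : 0 ≤ G x := by
    rcases le_or_gt 0 (l^2/(1+l*x) + 2*c) with hcase | hcase
    · -- monotone on [-1,x]
      have hmono : MonotoneOn G (Set.Icc (-1) x) := by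
        apply monotoneOn_of_deriv_nonneg (convex_Icc _ _)
        · intro t ht
          exact ((hderiv t ht.1).differentiableAt).continuousAt.continuousWithinAt
        · intro t ht
          rw [interior_Icc] at ht
          exact ((hderiv t ht.1.le).differentiableAt).differentiableWithinAt
        · intro t ht
          rw [interior_Icc] at ht
          rw [(hderiv t ht.1.le).deriv]
          have h1 : 0 ≤ l^2/(1+l*t) + 2*c :=
            le_trans hcase (hpsi_mono t x ht.1.le ht.2.le)
          have h2 : 0 ≤ -t := by linarith [ht.2, hx0]
          positivity
      have := hmono (Set.mem_Icc.mpr ⟨le_refl _, hx1⟩) (Set.mem_Icc.mpr ⟨hx1, le_refl _⟩) hx1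
      rwa [hG1] at this
    · -- antitone on [x,0]
      have hanti : AntitoneOn G (Set.Icc x 0) := by
        apply antitoneOn_of_deriv_nonpos (convex_Icc _ _)
        · intro t ht
          exact ((hderiv t (le_trans hx1 ht.1)).differentiableAt).continuousAt.continuousWithinAt
        · intro t ht
          rw [interior_Icc] at ht
          exact ((hderiv t (le_trans hx1 ht.1.le)).differentiableAt).differentiableWithinAt
        · intro t ht
          rw [interior_Icc] at ht
          rw [(hderiv t (le_trans hx1 ht.1.le)).deriv]
          have h1 : l^2/(1+l*t) + 2*c ≤ 0 :=
            le_trans (hpsi_mono x t hx1 ht.1.le) hcase.le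
          have h2 : 0 ≤ -t := by linarith [ht.2]
          exact mul_nonpos_of_nonneg_of_nonpos h2 h1
      have := hanti (Set.mem_Icc.mpr ⟨le_refl _, hx0⟩) (Set.mem_Icc.mpr ⟨hx0, le_refl _⟩) hx0
      rwa [hG0] at this
  simp only [hG] at key
  linarith


/-- The key pointwise inequality. -/
lemma aux_key (l : ℝ) (hl0 : 0 ≤ l) (hl1 : l < 1) (x : ℝ) (hx : -1 ≤ x) :
    Real.exp (l*x + (l + Real.log (1-l))*x^2) ≤ 1 + l*x := by
  have hpos : 0 < 1 + l*x := by nlinarith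
  have hlog : l*x + (l + Real.log (1-l))*x^2 ≤ Real.log (1+l*x) := by
    rcases le_or_gt x 0 with hx0 | hx0
    · exact aux_keyNeg l hl0 hl1 x hx hx0
    · have hB := aux_logB l hl0 hl1
      have hA := aux_logA (l*x) (by positivity)
      nlinarith [sq_nonneg x, sq_nonneg (l*x)]
  calc Real.exp (l*x + (l + Real.log (1-l))*x^2) ≤ Real.exp (Real.log (1+l*x)) :=
        Real.exp_le_exp.mpr hlog
    _ = 1 + l*x := Real.exp_log hpos

/-- Uniform bound on the exponent. -/
lemma aux_half (l : ℝ) (hl0 : 0 ≤ l) (hl1 : l < 1) (x : ℝ) :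
    l*x + (l + Real.log (1-l))*x^2 ≤ 1/2 := by
  have hB := aux_logB l hl0 hl1
  nlinarith [sq_nonneg (l*x - 1), sq_nonneg x]
open MeasureTheory Real Finset


/-- De la Peña / Fan–Grama–Liu supermartingale lemma: if `(ξ_i)` are martingale
differences with `ξ_i ≥ -1` a.s., then for `λ ∈ [0,1)`, the process
`U_k(λ) = exp{λ S_k + (λ + log(1-λ))[S]_k}` is a supermartingale and
`E[U_n(λ)] ≤ 1`. -/
theorem supermartingale_U {Ω : Type*} {m0 : MeasurableSpace Ω} (μ : Measure Ω)
    [IsProbabilityMeasure μ] (n : ℕ) (ℱ : Filtration ℕ m0) (ξ : ℕ → Ω → ℝ)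
    (hadapted : ∀ i, 1 ≤ i → i ≤ n → StronglyMeasurable[ℱ i] (ξ i))
    (hsq : ∀ i, 1 ≤ i → i ≤ n → MemLp (ξ i) 2 μ)
    (hcond : ∀ i, 1 ≤ i → i ≤ n → μ[ξ i | ℱ (i - 1)] =ᵐ[μ] 0)
    (hbdd : ∀ i, 1 ≤ i → i ≤ n → ∀ᵐ ω ∂μ, -1 ≤ ξ i ω)
    (l : ℝ) (hl0 : 0 ≤ l) (hl1 : l < 1)
    (U : ℕ → Ω → ℝ)
    (hU : ∀ k ω, U k ω =
      Real.exp (l * ∑ i ∈ Finset.Icc 1 k, ξ i ω +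
        (l + Real.log (1 - l)) * ∑ i ∈ Finset.Icc 1 k, (ξ i ω) ^ 2)) :
    (∀ k, k < n → μ[U (k + 1) | ℱ k] ≤ᵐ[μ] U k) ∧ ∫ ω, U n ω ∂μ ≤ 1 := by
  set c : ℝ := l + Real.log (1 - l) with hc
  -- nonnegativity
  have hUnonneg : ∀ k ω, 0 ≤ U k ω := fun k ω => by rw [hU]; exact (Real.exp_pos _).le
  -- uniform bound
  have hsum_le : ∀ k (ω : Ω), l * (∑ i ∈ Finset.Icc 1 k, ξ i ω)
      + c * ∑ i ∈ Finset.Icc 1 k, (ξ i ω)^2 ≤ k * (1/2) := by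
    intro k ω
    rw [Finset.mul_sum, Finset.mul_sum, ← Finset.sum_add_distrib]
    calc ∑ i ∈ Finset.Icc 1 k, (l * ξ i ω + c * (ξ i ω)^2)
        ≤ ∑ _i ∈ Finset.Icc 1 k, (1/2 : ℝ) :=
          Finset.sum_le_sum fun i _ => aux_half l hl0 hl1 (ξ i ω)
      _ = k * (1/2) := by
          rw [Finset.sum_const, Nat.card_Icc, nsmul_eq_mul]
          simp
  have hUbdd : ∀ k ω, U k ω ≤ Real.exp (k * (1/2)) := fun k ω => by
    rw [hU]; exact Real.exp_le_exp.mpr (hsum_le k ω)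
  -- strong measurability of U k wrt ℱ k, for k ≤ n
  have hmeasU : ∀ k, k ≤ n → StronglyMeasurable[ℱ k] (U k) := by
    intro k hk
    have hXi : ∀ i ∈ Finset.Icc 1 k, StronglyMeasurable[ℱ k] (ξ i) := by
      intro i hi
      rw [Finset.mem_Icc] at hi
      exact (hadapted i hi.1 (hi.2.trans hk)).mono (ℱ.mono hi.2)
    have hUeq : U k = fun ω => Real.exp (l * ∑ i ∈ Finset.Icc 1 k, ξ i ω
        + c * ∑ i ∈ Finset.Icc 1 k, (ξ i ω)^2) := funext (hU k)
    rw [hUeq]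
    apply Real.continuous_exp.comp_stronglyMeasurable
    apply StronglyMeasurable.add
    · exact (Finset.stronglyMeasurable_fun_sum _ hXi).const_mul l
    · exact (Finset.stronglyMeasurable_fun_sum _ (fun i hi => (hXi i hi).pow 2)).const_mul c
  -- integrability of U k, for k ≤ n
  have hUint : ∀ k, k ≤ n → Integrable (U k) μ := by
    intro k hk
    refine ⟨((hmeasU k hk).mono (ℱ.le k)).aestronglyMeasurable, ?_⟩
    apply MeasureTheory.HasFiniteIntegral.of_bounded (C := Real.exp (k * (1/2)))
    filter_upwards with ω
    rw [Real.norm_eq_abs, abs_of_nonneg (hUnonneg k ω)]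
    exact hUbdd k ω
  -- the supermartingale property
  have hsuper : ∀ k, k < n → μ[U (k + 1) | ℱ k] ≤ᵐ[μ] U k := by
    intro k hk
    set V : Ω → ℝ := fun ω => Real.exp (l * ξ (k+1) ω + c * (ξ (k+1) ω)^2) with hV
    have h1k : (1:ℕ) ≤ k + 1 := by omega
    have hkn : k + 1 ≤ n := hk
    have hsplit : U (k+1) = U k * V := by
      funext ω
      show U (k+1) ω = U k ω * V ω
      rw [hU, hU, hV, ← Real.exp_add]
      congr 1
      rw [Finset.sum_Icc_succ_top h1k, Finset.sum_Icc_succ_top h1k]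
      ring
    have hVsm : StronglyMeasurable[ℱ (k+1)] V :=
      Real.continuous_exp.comp_stronglyMeasurable
        (((hadapted (k+1) h1k hkn).const_mul l).add
          (((hadapted (k+1) h1k hkn).pow 2).const_mul c))
    have hVmeas : AEStronglyMeasurable V μ :=
      (hVsm.mono (ℱ.le (k+1))).aestronglyMeasurable
    have hVint : Integrable V μ := by
      refine ⟨hVmeas, ?_⟩
      apply MeasureTheory.HasFiniteIntegral.of_bounded (C := Real.exp (1/2))
      filter_upwards with ω
      rw [Real.norm_eq_abs, abs_of_nonneg (Real.exp_pos _).le]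
      exact Real.exp_le_exp.mpr (aux_half l hl0 hl1 (ξ (k+1) ω))
    have hξint : Integrable (ξ (k+1)) μ := (hsq (k+1) h1k hkn).integrable one_le_two
    have hWint : Integrable (fun ω => 1 + l * ξ (k+1) ω) μ :=
      (integrable_const 1).add (hξint.const_mul l)
    have hVleW : V ≤ᵐ[μ] fun ω => 1 + l * ξ (k+1) ω := by
      filter_upwards [hbdd (k+1) h1k hkn] with ω hω
      exact aux_key l hl0 hl1 (ξ (k+1) ω) hω
    have step1 : μ[U (k+1) | ℱ k] =ᵐ[μ] U k * μ[V | ℱ k] := by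
      rw [hsplit]
      exact condExp_mul_of_stronglyMeasurable_left (hmeasU k hk.le)
        (hsplit ▸ hUint (k+1) hkn) hVint
    have step2 : μ[V | ℱ k] ≤ᵐ[μ] μ[fun ω => 1 + l * ξ (k+1) ω | ℱ k] :=
      condExp_mono hVint hWint hVleW
    have step3 : μ[fun ω => 1 + l * ξ (k+1) ω | ℱ k] =ᵐ[μ] fun _ => 1 := by
      have heq : (fun ω => 1 + l * ξ (k+1) ω) = (fun _ => (1:ℝ)) + l • ξ (k+1) := by
        funext ω; simp [smul_eq_mul]
      rw [heq]
      have hcnd : μ[ξ (k+1) | ℱ k] =ᵐ[μ] 0 := by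
        have := hcond (k+1) h1k hkn
        simpa using this
      calc μ[(fun _ => (1:ℝ)) + l • ξ (k+1) | ℱ k]
          =ᵐ[μ] μ[(fun _ => (1:ℝ)) | ℱ k] + μ[l • ξ (k+1) | ℱ k] :=
            condExp_add (integrable_const 1) (hξint.smul l) _
        _ =ᵐ[μ] (fun _ => (1:ℝ)) + l • μ[ξ (k+1) | ℱ k] := by
            exact Filter.EventuallyEq.add (Filter.EventuallyEq.of_eq (condExp_const (ℱ.le k) 1)) (condExp_smul l (ξ (k+1)) _)
        _ =ᵐ[μ] fun _ => 1 := by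
            filter_upwards [hcnd] with ω hω
            simp [hω]
    filter_upwards [step1, step2, step3] with ω h1 h2 h3
    rw [h1]
    have h2' : (μ[V | ℱ k]) ω ≤ 1 := by
      have := h2
      calc (μ[V | ℱ k]) ω ≤ (μ[fun ω => 1 + l * ξ (k+1) ω | ℱ k]) ω := h2
        _ = 1 := h3
    calc U k ω * (μ[V | ℱ k]) ω ≤ U k ω * 1 :=
          mul_le_mul_of_nonneg_left h2' (hUnonneg k ω)
      _ = U k ω := mul_one _
  refine ⟨hsuper, ?_⟩
  -- integral bound by induction
  have hind : ∀ k, k ≤ n → ∫ ω, U k ω ∂μ ≤ 1 := by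
    intro k
    induction k with
    | zero =>
      intro _
      have : U 0 = fun _ => 1 := by
        funext ω; rw [hU]; simp
      rw [this]
      simp
    | succ k ih =>
      intro hk
      have hk' : k < n := by omega
      calc ∫ ω, U (k+1) ω ∂μ = ∫ ω, (μ[U (k+1) | ℱ k]) ω ∂μ :=
            (integral_condExp (ℱ.le k)).symm
        _ ≤ ∫ ω, U k ω ∂μ :=
            integral_mono_ae integrable_condExp (hUint k hk'.le) (hsuper k hk')
        _ ≤ 1 := ih hk'.le
  exact hind n le_rfl
end

section
/- Let (ξ_i, F_i)_{i=1..n} be a martingale difference sequence with ξ_i ≥ -1 a.s. Let S_n = Σξ_i and ⟨S⟩_n = Σ E[ξ_i² | F_{i-1}]. Then for every λ ≥ 0, E[exp{-λ S_n - (e^λ - 1 - λ)⟨S⟩_n}] ≤ 1. -/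
open MeasureTheory Real Finset

lemma exp_mul_le_seg' {t s : ℝ} (hs0 : 0 ≤ s) (hs1 : s ≤ 1) :
    Real.exp (t * s) ≤ 1 + s * (Real.exp t - 1) := by
  have h := convexOn_exp.2 (Set.mem_univ (0:ℝ)) (Set.mem_univ t)
      (by linarith : (0:ℝ) ≤ 1 - s) hs0 (by ring)
  simp only [smul_eq_mul, mul_zero, zero_add, Real.exp_zero] at h
  calc Real.exp (t * s) = Real.exp (s * t) := by ring_nf
    _ ≤ (1 - s) * 1 + s * Real.exp t := h
    _ = 1 + s * (Real.exp t - 1) := by ring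

lemma freedman_key_ineq {l x : ℝ} (hl : 0 ≤ l) (hx : -1 ≤ x) :
    Real.exp (-(l * x)) ≤ 1 - l * x + (Real.exp l - 1 - l) * x ^ 2 := by
  set F : ℝ → ℝ := fun t => 1 - t * x + (Real.exp t - 1 - t) * x ^ 2 - Real.exp (-(t * x)) with hF
  have hderiv : ∀ t : ℝ, HasDerivAt F (x * (Real.exp (-(t * x)) - 1) + (Real.exp t - 1) * x ^ 2) t := by
    intro t
    have h1 : HasDerivAt (fun t : ℝ => Real.exp (-(t * x))) (Real.exp (-(t * x)) * (-x)) t := by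
      have := ((hasDerivAt_id t).mul_const x).neg.exp
      simpa using this
    have h2 : HasDerivAt F (-x + (Real.exp t - 1 - 1) * x ^ 2 - Real.exp (-(t * x)) * (-x) + x ^ 2) t := by
      have : HasDerivAt (fun t => 1 - t * x + (Real.exp t - 1 - t) * x ^ 2 - Real.exp (-(t * x)))
          ((0 - 1 * x) + (Real.exp t - 0 - 1) * x ^ 2 - Real.exp (-(t * x)) * (-x)) t := by
        exact (((hasDerivAt_const t (1:ℝ)).sub ((hasDerivAt_id t).mul_const x)).add
          ((((Real.hasDerivAt_exp t).sub (hasDerivAt_const t 1)).sub (hasDerivAt_id t)).mul_const (x^2))).sub h1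
      convert this using 1
      ring
    convert h2 using 1
    ring
  have hmono : MonotoneOn F (Set.Ici 0) := by
    apply monotoneOn_of_deriv_nonneg (convex_Ici 0)
    · exact Continuous.continuousOn (by fun_prop)
    · intro t ht
      exact (hderiv t).differentiableAt.differentiableWithinAt
    · intro t ht
      rw [(hderiv t).deriv]
      rw [interior_Ici] at ht
      have ht' : (0:ℝ) ≤ t := le_of_lt ht
      rcases le_or_gt 0 x with hx0 | hx0
      · have h1 : -(t * x) + 1 ≤ Real.exp (-(t * x)) := Real.add_one_le_exp _
        have h2 : t + 1 ≤ Real.exp t := Real.add_one_le_exp _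
        have : x * (Real.exp (-(t * x)) - 1) ≥ x * (-(t * x)) := by
          apply mul_le_mul_of_nonneg_left (by linarith) hx0
        nlinarith [sq_nonneg x]
      · have hs0 : 0 ≤ -x := by linarith
        have hs1 : -x ≤ 1 := by linarith
        have h1 : Real.exp (t * (-x)) ≤ 1 + (-x) * (Real.exp t - 1) := exp_mul_le_seg' hs0 hs1
        have h2 : (1:ℝ) ≤ Real.exp t := by
          have := Real.add_one_le_exp t; linarith
        have h1' : Real.exp (-(t * x)) - 1 ≤ -x * (Real.exp t - 1) := by
          rw [show -(t * x) = t * (-x) by ring]; linarith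
        nlinarith [mul_le_mul_of_nonpos_left h1' hx0.le]
  have h0 : F 0 = 0 := by simp [hF]
  have := hmono (Set.self_mem_Ici) (Set.mem_Ici.mpr hl) hl
  rw [h0] at this
  simp only [hF] at this
  linarith

lemma freedman_aux {Ω : Type*} {m0 : MeasurableSpace Ω} (μ : Measure Ω)
    [IsProbabilityMeasure μ] (ℱ : Filtration ℕ m0) (ξ : ℕ → Ω → ℝ)
    (l : ℝ) (hl0 : 0 ≤ l) :
    ∀ n : ℕ, (∀ i, 1 ≤ i → i ≤ n → StronglyMeasurable[ℱ i] (ξ i)) →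
      (∀ i, 1 ≤ i → i ≤ n → MemLp (ξ i) 2 μ) →
      (∀ i, 1 ≤ i → i ≤ n → μ[ξ i | ℱ (i - 1)] =ᵐ[μ] 0) →
      (∀ i, 1 ≤ i → i ≤ n → ∀ᵐ ω ∂μ, -1 ≤ ξ i ω) →
    ∫ ω, Real.exp (-l * ∑ i ∈ Finset.Icc 1 n, ξ i ω -
      (Real.exp l - 1 - l) *
        ∑ i ∈ Finset.Icc 1 n, (μ[(fun ω' => (ξ i ω') ^ 2) | ℱ (i - 1)]) ω) ∂μ ≤ 1 := by
  intro n
  induction n with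
  | zero =>
    intro _ _ _ _
    simp
  | succ n ih =>
    intro hadapted hsq hcond hbdd
    set c : ℝ := Real.exp l - 1 - l with hcdef
    have hc : 0 ≤ c := by
      have := Real.add_one_le_exp l; simp only [hcdef]; linarith
    set g : ℕ → Ω → ℝ := fun i => μ[(fun ω' => (ξ i ω') ^ 2) | ℱ (i - 1)] with hgdef
    have hins : Finset.Icc 1 (n+1) = insert (n+1) (Finset.Icc 1 n) := by
      ext i; simp only [Finset.mem_Icc, Finset.mem_insert]; omega
    have hnotmem : (n+1) ∉ Finset.Icc 1 n := by simp
    -- facts about the top increment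
    have hXmeas : StronglyMeasurable[ℱ (n+1)] (ξ (n+1)) := hadapted (n+1) (by omega) le_rfl
    have hX2 : MemLp (ξ (n+1)) 2 μ := hsq (n+1) (by omega) le_rfl
    have hXcond : μ[ξ (n+1) | ℱ n] =ᵐ[μ] 0 := hcond (n+1) (by omega) le_rfl
    have hXbdd : ∀ᵐ ω ∂μ, -1 ≤ ξ (n+1) ω := hbdd (n+1) (by omega) le_rfl
    -- measurability of the partial sums
    have hSmeas : StronglyMeasurable[ℱ n] (fun ω => ∑ i ∈ Finset.Icc 1 n, ξ i ω) :=
      Finset.stronglyMeasurable_fun_sum _ fun i hi =>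
        (hadapted i (Finset.mem_Icc.1 hi).1 (by have := (Finset.mem_Icc.1 hi).2; omega)).mono
          (ℱ.mono (Finset.mem_Icc.1 hi).2)
    have hAmeas : StronglyMeasurable[ℱ n] (fun ω => ∑ i ∈ Finset.Icc 1 (n+1), g i ω) :=
      Finset.stronglyMeasurable_fun_sum _ fun i hi =>
        stronglyMeasurable_condExp.mono (ℱ.mono (by
          have := (Finset.mem_Icc.1 hi).2; omega))
    have hAnmeas : StronglyMeasurable[ℱ n] (fun ω => ∑ i ∈ Finset.Icc 1 n, g i ω) :=
      Finset.stronglyMeasurable_fun_sum _ fun i hi =>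
        stronglyMeasurable_condExp.mono (ℱ.mono (by
          have := (Finset.mem_Icc.1 hi).2; omega))
    set H : Ω → ℝ := fun ω => Real.exp (-l * ∑ i ∈ Finset.Icc 1 n, ξ i ω -
        c * ∑ i ∈ Finset.Icc 1 (n+1), g i ω) with hHdef
    set E : Ω → ℝ := fun ω => Real.exp (-(l * ξ (n+1) ω)) with hEdef
    set Fn : Ω → ℝ := fun ω => Real.exp (-l * ∑ i ∈ Finset.Icc 1 n, ξ i ω -
        c * ∑ i ∈ Finset.Icc 1 n, g i ω) with hFndef
    have hHmeas : StronglyMeasurable[ℱ n] H :=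
      Real.continuous_exp.comp_stronglyMeasurable
        ((hSmeas.const_mul (-l)).sub (hAmeas.const_mul c))
    have hEmeas : StronglyMeasurable[ℱ (n+1)] E :=
      Real.continuous_exp.comp_stronglyMeasurable (hXmeas.const_mul l).neg
    have hFnmeas : StronglyMeasurable[ℱ n] Fn :=
      Real.continuous_exp.comp_stronglyMeasurable
        ((hSmeas.const_mul (-l)).sub (hAnmeas.const_mul c))
    -- a.e. facts
    have hgnonneg : ∀ᵐ ω ∂μ, ∀ i, 0 ≤ g i ω := by
      rw [ae_all_iff]
      intro i
      exact (condExp_nonneg (Filter.Eventually.of_forall fun ω => sq_nonneg _)).mono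
        fun ω hω => hω
    have hξae : ∀ᵐ ω ∂μ, ∀ i, 1 ≤ i → i ≤ n + 1 → -1 ≤ ξ i ω := by
      rw [ae_all_iff]
      intro i
      by_cases h : 1 ≤ i ∧ i ≤ n + 1
      · filter_upwards [hbdd i h.1 h.2] with ω hω _ _; exact hω
      · filter_upwards with ω h1 h2; exact absurd ⟨h1, h2⟩ h
    have hHpos : ∀ ω, 0 < H ω := fun ω => Real.exp_pos _
    have hbd_aux : ∀ᵐ ω ∂μ, (-(n:ℝ) ≤ ∑ i ∈ Finset.Icc 1 n, ξ i ω) ∧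
        (0 ≤ ∑ i ∈ Finset.Icc 1 (n+1), g i ω) ∧ (0 ≤ ∑ i ∈ Finset.Icc 1 n, g i ω) := by
      filter_upwards [hgnonneg, hξae] with ω hg hξ
      refine ⟨?_, Finset.sum_nonneg fun i _ => hg i, Finset.sum_nonneg fun i _ => hg i⟩
      calc -(n:ℝ) = ∑ i ∈ Finset.Icc 1 n, (-1:ℝ) := by
            simp [Nat.card_Icc]
        _ ≤ _ := Finset.sum_le_sum fun i hi =>
            hξ i (Finset.mem_Icc.1 hi).1 (by have := (Finset.mem_Icc.1 hi).2; omega)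
    have hHbd : ∀ᵐ ω ∂μ, ‖H ω‖ ≤ Real.exp (l * n) := by
      filter_upwards [hbd_aux] with ω ⟨hS, hA, _⟩
      rw [Real.norm_eq_abs, Real.abs_exp]
      apply Real.exp_le_exp.2
      have h1 : l * (-∑ i ∈ Finset.Icc 1 n, ξ i ω) ≤ l * n :=
        mul_le_mul_of_nonneg_left (by linarith) hl0
      have h2 : 0 ≤ c * ∑ i ∈ Finset.Icc 1 (n+1), g i ω := mul_nonneg hc hA
      nlinarith
    have hFnbd : ∀ᵐ ω ∂μ, ‖Fn ω‖ ≤ Real.exp (l * n) := by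
      filter_upwards [hbd_aux] with ω ⟨hS, _, hA⟩
      rw [Real.norm_eq_abs, Real.abs_exp]
      apply Real.exp_le_exp.2
      have h1 : l * (-∑ i ∈ Finset.Icc 1 n, ξ i ω) ≤ l * n :=
        mul_le_mul_of_nonneg_left (by linarith) hl0
      have h2 : 0 ≤ c * ∑ i ∈ Finset.Icc 1 n, g i ω := mul_nonneg hc hA
      nlinarith
    have hEbd : ∀ᵐ ω ∂μ, ‖E ω‖ ≤ Real.exp l := by
      filter_upwards [hXbdd] with ω hω
      rw [Real.norm_eq_abs, Real.abs_exp]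
      exact Real.exp_le_exp.2 (by nlinarith)
    -- integrability
    have hHint : Integrable H μ :=
      Integrable.mono' (integrable_const (Real.exp (l * n)))
        (hHmeas.mono (ℱ.le n)).aestronglyMeasurable hHbd
    have hEint : Integrable E μ :=
      Integrable.mono' (integrable_const (Real.exp l))
        (hEmeas.mono (ℱ.le (n+1))).aestronglyMeasurable hEbd
    have hFnint : Integrable Fn μ :=
      Integrable.mono' (integrable_const (Real.exp (l * n)))
        (hFnmeas.mono (ℱ.le n)).aestronglyMeasurable hFnbd
    have hHEint : Integrable (H * E) μ := by
      apply Integrable.mono' (integrable_const (Real.exp (l * n) * Real.exp l))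
        (((hHmeas.mono (ℱ.le n)).mul (hEmeas.mono (ℱ.le (n+1)))).aestronglyMeasurable)
      filter_upwards [hHbd, hEbd] with ω h1 h2
      calc ‖(H * E) ω‖ = ‖H ω‖ * ‖E ω‖ := norm_mul _ _
        _ ≤ Real.exp (l * n) * Real.exp l :=
            mul_le_mul h1 h2 (norm_nonneg _) (Real.exp_pos _).le
    have hXint : Integrable (ξ (n+1)) μ := hX2.integrable one_le_two
    have hX2int : Integrable (fun ω => ξ (n+1) ω ^ 2) μ := hX2.integrable_sq
    set P : Ω → ℝ := fun ω => 1 - l * ξ (n+1) ω + c * ξ (n+1) ω ^ 2 with hPdef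
    have hPint : Integrable P μ :=
      ((integrable_const (1:ℝ)).sub (hXint.const_mul l)).add (hX2int.const_mul c)
    -- conditional expectation estimates
    have hcond1 : μ[E | ℱ n] ≤ᵐ[μ] μ[P | ℱ n] := by
      refine condExp_mono hEint hPint ?_
      filter_upwards [hXbdd] with ω hω
      simpa [hEdef, hPdef] using freedman_key_ineq hl0 hω
    have hcond2 : μ[P | ℱ n] =ᵐ[μ] fun ω => 1 + c * g (n+1) ω := by
      have e1 : P = (fun _ => (1:ℝ)) + ((-l) • ξ (n+1) + c • (fun ω => ξ (n+1) ω ^ 2)) := by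
        funext ω
        simp only [hPdef, Pi.add_apply, Pi.smul_apply, smul_eq_mul]
        ring
      rw [e1]
      have h2a := condExp_add (μ := μ) (m := ℱ n) (integrable_const (1:ℝ))
        ((hXint.smul (-l)).add (hX2int.smul c))
      have h2b := condExp_add (μ := μ) (m := ℱ n) (hXint.smul (-l)) (hX2int.smul c)
      have h2c := condExp_smul (μ := μ) (m := ℱ n) (-l) (ξ (n+1))
      have h2d := condExp_smul (μ := μ) (m := ℱ n) c (fun ω => ξ (n+1) ω ^ 2)
      have h2e := condExp_const (μ := μ) (ℱ.le n) (1:ℝ)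
      filter_upwards [h2a, h2b, h2c, h2d, hXcond] with ω ha hb hc' hd hx
      simp only [Pi.add_apply] at ha hb
      rw [ha, hb, hc', hd, h2e]
      simp only [Pi.smul_apply, smul_eq_mul, Pi.zero_apply] at hx ⊢
      rw [hx]
      have hgg : g (n+1) = μ[fun ω' => ξ (n+1) ω' ^ 2 | ℱ n] := rfl
      rw [hgg]
      ring
    have hcond3 : μ[E | ℱ n] ≤ᵐ[μ] fun ω => Real.exp (c * g (n+1) ω) := by
      filter_upwards [hcond1, hcond2] with ω h1 h2
      have h3 := Real.add_one_le_exp (c * g (n+1) ω)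
      calc (μ[E | ℱ n]) ω ≤ (μ[P | ℱ n]) ω := h1
        _ = 1 + c * g (n+1) ω := h2
        _ ≤ Real.exp (c * g (n+1) ω) := by linarith
    have hpull : μ[H * E | ℱ n] =ᵐ[μ] H * μ[E | ℱ n] :=
      condExp_mul_of_stronglyMeasurable_left hHmeas hHEint hEint
    -- rewrite the target integrand
    have hrw : ∀ ω, Real.exp (-l * ∑ i ∈ Finset.Icc 1 (n+1), ξ i ω -
        c * ∑ i ∈ Finset.Icc 1 (n+1), g i ω) = H ω * E ω := by
      intro ω
      simp only [hHdef, hEdef]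
      rw [← Real.exp_add]
      congr 1
      rw [hins, Finset.sum_insert hnotmem]
      ring
    have hae : μ[H * E | ℱ n] ≤ᵐ[μ] Fn := by
      filter_upwards [hpull, hcond3] with ω hp h3
      have hle : H ω * (μ[E | ℱ n]) ω ≤ H ω * Real.exp (c * g (n+1) ω) :=
        mul_le_mul_of_nonneg_left h3 (hHpos ω).le
      have heq : H ω * Real.exp (c * g (n+1) ω) = Fn ω := by
        simp only [hHdef, hFndef]
        rw [← Real.exp_add]
        congr 1
        rw [hins, Finset.sum_insert hnotmem]
        ring
      calc (μ[H * E | ℱ n]) ω = (H * μ[E | ℱ n]) ω := hp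
        _ = H ω * (μ[E | ℱ n]) ω := rfl
        _ ≤ H ω * Real.exp (c * g (n+1) ω) := hle
        _ = Fn ω := heq
    calc ∫ ω, Real.exp (-l * ∑ i ∈ Finset.Icc 1 (n+1), ξ i ω -
          c * ∑ i ∈ Finset.Icc 1 (n+1), g i ω) ∂μ
        = ∫ ω, H ω * E ω ∂μ := by
          exact integral_congr_ae (Filter.Eventually.of_forall hrw)
      _ = ∫ ω, (H * E) ω ∂μ := rfl
      _ = ∫ ω, (μ[H * E | ℱ n]) ω ∂μ := (integral_condExp (ℱ.le n) (f := H * E)).symm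
      _ ≤ ∫ ω, Fn ω ∂μ := integral_mono_ae integrable_condExp hFnint hae
      _ ≤ 1 := ih (fun i h1 h2 => hadapted i h1 (by omega))
          (fun i h1 h2 => hsq i h1 (by omega))
          (fun i h1 h2 => hcond i h1 (by omega))
          (fun i h1 h2 => hbdd i h1 (by omega))

/-- Freedman's lemma: if `(ξ_i)` are martingale differences with `ξ_i ≥ -1` a.s.,
then for every `λ ≥ 0`, `E[exp{-λ S_n - (e^λ - 1 - λ)⟨S⟩_n}] ≤ 1`, where
`⟨S⟩_n = Σ_i E[ξ_i² | F_{i-1}]`. -/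
theorem integral_exp_neg_freedman {Ω : Type*} {m0 : MeasurableSpace Ω} (μ : Measure Ω)
    [IsProbabilityMeasure μ] (n : ℕ) (ℱ : Filtration ℕ m0) (ξ : ℕ → Ω → ℝ)
    (hadapted : ∀ i, 1 ≤ i → i ≤ n → StronglyMeasurable[ℱ i] (ξ i))
    (hsq : ∀ i, 1 ≤ i → i ≤ n → MemLp (ξ i) 2 μ)
    (hcond : ∀ i, 1 ≤ i → i ≤ n → μ[ξ i | ℱ (i - 1)] =ᵐ[μ] 0)
    (hbdd : ∀ i, 1 ≤ i → i ≤ n → ∀ᵐ ω ∂μ, -1 ≤ ξ i ω)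
    (l : ℝ) (hl0 : 0 ≤ l) :
    ∫ ω, Real.exp (-l * ∑ i ∈ Finset.Icc 1 n, ξ i ω -
      (Real.exp l - 1 - l) *
        ∑ i ∈ Finset.Icc 1 n, (μ[(fun ω' => (ξ i ω') ^ 2) | ℱ (i - 1)]) ω) ∂μ ≤ 1 := by
  exact freedman_aux μ ℱ ξ l hl0 n hadapted hsq hcond hbdd
end

section
/- Let (ξ_i, F_i)_{i=1..n} be a martingale difference sequence with ξ_i ≥ -1 a.s., S_n = Σξ_i, [S]_n = Σξ_i². Then for all x, y > 0, P(S_n ≥ x[S]_n and [S]_n ≥ y) ≤ exp{-(x - log(1+x))·y} ≤ exp{-x²y/(2(1+x))}. -/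
open MeasureTheory Real Finset

section Aux

private lemma bern_hasSum_aux {w : ℝ} (hw : |w| < 1) :
    HasSum (fun n : ℕ => w ^ (n + 2) / (n + 2)) (-Real.log (1 - w) - w) := by
  have h := Real.hasSum_pow_div_log_of_abs_lt_one hw
  have h2 := (hasSum_nat_add_iff' 1).mpr h
  norm_num at h2
  convert h2 using 2 with n
  case e'_3 => rfl
  push_cast
  ring

private lemma bern_half_le {l : ℝ} (h0 : 0 ≤ l) (h1 : l < 1) :
    l ^ 2 / 2 ≤ -Real.log (1 - l) - l := by
  have h := bern_hasSum_aux (w := l) (by rw [abs_of_nonneg h0]; exact h1)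
  have h2 := le_hasSum h 0 (fun j _ => by positivity)
  norm_num at h2
  convert h2 using 2

private lemma bern_key_mono {w l : ℝ} (hw0 : 0 ≤ w) (hwl : w ≤ l) (hl : l < 1) :
    l ^ 2 * (-Real.log (1 - w) - w) ≤ w ^ 2 * (-Real.log (1 - l) - l) := by
  have hl0 : 0 ≤ l := le_trans hw0 hwl
  have h1 := (bern_hasSum_aux (w := w) (by rw [abs_of_nonneg hw0]; linarith)).mul_left (l ^ 2)
  have h2 := (bern_hasSum_aux (w := l) (by rw [abs_of_nonneg hl0]; exact hl)).mul_left (w ^ 2)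
  refine hasSum_le (fun n => ?_) h1 h2
  have hpow : w ^ n ≤ l ^ n := pow_le_pow_left₀ hw0 hwl n
  have hn : (0:ℝ) < (n:ℝ) + 2 := by positivity
  rw [pow_add, pow_add, mul_div_assoc', mul_div_assoc', div_le_div_iff₀ hn hn]
  have hmul := mul_le_mul_of_nonneg_left hpow
    (show 0 ≤ l ^ 2 * w ^ 2 * ((n:ℝ) + 2) by positivity)
  nlinarith [hmul]

private lemma bern_sq_half (v : ℝ) (hv : 0 ≤ v) : v - Real.log (1 + v) ≤ v ^ 2 / 2 := by
  set G : ℝ → ℝ := fun s => s ^ 2 / 2 - s + Real.log (1 + s) with hG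
  have key : ∀ t : ℝ, 0 ≤ t → HasDerivAt G (t - 1 + (1 + t)⁻¹) t := by
    intro t ht
    have h1 : (1:ℝ) + t ≠ 0 := by positivity
    have hd : HasDerivAt (fun s : ℝ => Real.log (1 + s)) ((1:ℝ) / (1 + t)) t := by
      have := ((hasDerivAt_id t).const_add 1).log h1
      simpa using this
    have hp : HasDerivAt (fun s : ℝ => s ^ 2 / 2 - s) (t - 1) t := by
      have := ((hasDerivAt_pow 2 t).div_const 2).sub (hasDerivAt_id t)
      exact this.congr_deriv (by norm_num)
    have := hp.add hd
    exact this.congr_deriv (by rw [one_div])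
  have hmono : MonotoneOn G (Set.Ici 0) := by
    apply monotoneOn_of_deriv_nonneg (convex_Ici 0)
    · exact fun t ht => (key t ht).continuousAt.continuousWithinAt
    · intro t ht
      rw [interior_Ici] at ht
      exact (key t (le_of_lt ht)).differentiableAt.differentiableWithinAt
    · intro t ht
      rw [interior_Ici] at ht
      have h0 : 0 < t := ht
      have h1 : (0:ℝ) < 1 + t := by linarith
      rw [(key t h0.le).deriv]
      have e : t - 1 + (1 + t)⁻¹ = t ^ 2 / (1 + t) := by
        field_simp
        ring
      rw [e]
      positivity
  have h0 : G 0 = 0 := by simp [hG]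
  have := hmono (Set.self_mem_Ici) (Set.mem_Ici.mpr hv) hv
  rw [h0] at this
  simp only [hG] at this
  linarith

private lemma bern_log_le_pade (x : ℝ) (hx : 0 ≤ x) :
    x ^ 2 / (2 * (1 + x)) ≤ x - Real.log (1 + x) := by
  set D : ℝ → ℝ := fun s => s - Real.log (1 + s) - s ^ 2 / (2 * (1 + s)) with hD
  have key : ∀ t : ℝ, 0 ≤ t → HasDerivAt D
      (1 - 1 / (1 + t) - (2 * t * (2 * (1 + t)) - t ^ 2 * 2) / (2 * (1 + t)) ^ 2) t := by
    intro t ht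
    have h1 : (1:ℝ) + t ≠ 0 := by positivity
    have h2 : (2:ℝ) * (1 + t) ≠ 0 := by positivity
    have hd : HasDerivAt (fun s : ℝ => Real.log (1 + s)) ((1:ℝ) / (1 + t)) t := by
      have := ((hasDerivAt_id t).const_add 1).log h1
      simpa using this
    have hq : HasDerivAt (fun s : ℝ => s ^ 2 / (2 * (1 + s)))
        ((2 * t * (2 * (1 + t)) - t ^ 2 * 2) / (2 * (1 + t)) ^ 2) t := by
      have := (hasDerivAt_pow 2 t).div (((hasDerivAt_id t).const_add 1).const_mul 2) h2
      refine this.congr_deriv ?_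
      simp only [id_eq]
      ring
    have := ((hasDerivAt_id t).sub hd).sub hq
    exact this
  have hmono : MonotoneOn D (Set.Ici 0) := by
    apply monotoneOn_of_deriv_nonneg (convex_Ici 0)
    · exact fun t ht => (key t ht).continuousAt.continuousWithinAt
    · intro t ht
      rw [interior_Ici] at ht
      have h0 : 0 < t := ht
      exact (key t h0.le).differentiableAt.differentiableWithinAt
    · intro t ht
      rw [interior_Ici] at ht
      have h0 : 0 < t := ht
      have h1 : (0:ℝ) < 1 + t := by linarith
      rw [(key t h0.le).deriv]
      have e : 1 - 1 / (1 + t) - (2 * t * (2 * (1 + t)) - t ^ 2 * 2) / (2 * (1 + t)) ^ 2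
          = t ^ 2 / (2 * (1 + t) ^ 2) := by
        field_simp
        ring
      rw [e]
      positivity
  have h0 : D 0 = 0 := by simp [hD]
  have := hmono (Set.self_mem_Ici) (Set.mem_Ici.mpr hx) hx
  rw [h0] at this
  simp only [hD] at this
  linarith

private lemma bern_keyA {l : ℝ} (hl0 : 0 < l) (hl1 : l < 1) {u : ℝ} (hu : -1 ≤ u) :
    Real.exp (l * u - (-l - Real.log (1 - l)) * u ^ 2) ≤ 1 + l * u := by
  have hlu : 0 < 1 + l * u := by nlinarith
  rw [← Real.exp_log hlu, Real.exp_le_exp]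
  rcases le_or_gt 0 u with h0 | h0
  · have h2 := bern_sq_half (l * u) (by positivity)
    have h3 := bern_half_le hl0.le hl1
    nlinarith [sq_nonneg u, mul_nonneg (mul_nonneg hl0.le hl0.le) (mul_nonneg h0 h0)]
  · have h4 := bern_key_mono (w := -(l * u)) (l := l) (by nlinarith) (by nlinarith) hl1
    have e : 1 - -(l * u) = 1 + l * u := by ring
    rw [e] at h4
    nlinarith [sq_nonneg l, mul_pos hl0 hl0]

private lemma bern_integral_exp_le {Ω : Type*} {m0 : MeasurableSpace Ω}
    (μ : Measure Ω) [IsProbabilityMeasure μ] (n : ℕ) (ℱ : Filtration ℕ m0)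
    (ξ : ℕ → Ω → ℝ)
    (hadapted : ∀ i, 1 ≤ i → i ≤ n → StronglyMeasurable[ℱ i] (ξ i))
    (hsq : ∀ i, 1 ≤ i → i ≤ n → MemLp (ξ i) 2 μ)
    (hcond : ∀ i, 1 ≤ i → i ≤ n → μ[ξ i | ℱ (i - 1)] =ᵐ[μ] 0)
    (hbdd : ∀ i, 1 ≤ i → i ≤ n → ∀ᵐ ω ∂μ, -1 ≤ ξ i ω)
    {l h : ℝ} (hh : l ^ 2 / 2 ≤ h)
    (hkey : ∀ u : ℝ, -1 ≤ u → Real.exp (l * u - h * u ^ 2) ≤ 1 + l * u) :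
    ∀ k, k ≤ n →
      ∫ ω, Real.exp (∑ i ∈ Finset.Icc 1 k, (l * ξ i ω - h * (ξ i ω) ^ 2)) ∂μ ≤ 1 := by
  have hterm : ∀ u : ℝ, l * u - h * u ^ 2 ≤ 1 / 2 := by
    intro u
    nlinarith [sq_nonneg (l * u - 1), sq_nonneg u]
  have hmeas : ∀ k, k ≤ n → StronglyMeasurable[ℱ k]
      (fun ω => Real.exp (∑ i ∈ Finset.Icc 1 k, (l * ξ i ω - h * (ξ i ω) ^ 2))) := by
    intro k hk
    apply Real.continuous_exp.comp_stronglyMeasurable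
    apply Finset.stronglyMeasurable_fun_sum
    intro i hi
    rw [Finset.mem_Icc] at hi
    have hsm : StronglyMeasurable[ℱ k] (ξ i) :=
      (hadapted i hi.1 (le_trans hi.2 hk)).mono (ℱ.mono hi.2)
    have e : (fun ω => l * ξ i ω - h * (ξ i ω) ^ 2)
        = fun ω => l * ξ i ω - h * (ξ i ω * ξ i ω) := by
      funext ω; ring
    rw [e]
    exact (hsm.const_mul l).sub ((hsm.mul hsm).const_mul h)
  have hbound : ∀ k, ∀ ω : Ω,
      ‖Real.exp (∑ i ∈ Finset.Icc 1 k, (l * ξ i ω - h * (ξ i ω) ^ 2))‖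
        ≤ Real.exp (k * (1 / 2)) := by
    intro k ω
    rw [Real.norm_eq_abs, Real.abs_exp, Real.exp_le_exp]
    calc ∑ i ∈ Finset.Icc 1 k, (l * ξ i ω - h * (ξ i ω) ^ 2)
        ≤ ∑ i ∈ Finset.Icc 1 k, (1 / 2 : ℝ) :=
          Finset.sum_le_sum (fun i _ => hterm (ξ i ω))
      _ ≤ k * (1 / 2) := by
          rw [Finset.sum_const, Nat.card_Icc]
          simp
  have hint : ∀ k, k ≤ n → Integrable
      (fun ω => Real.exp (∑ i ∈ Finset.Icc 1 k, (l * ξ i ω - h * (ξ i ω) ^ 2))) μ := by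
    intro k hk
    exact (memLp_top_of_bound ((hmeas k hk).mono (ℱ.le k)).aestronglyMeasurable _
      (Filter.Eventually.of_forall (hbound k))).integrable le_top
  intro k
  induction k with
  | zero =>
    intro _
    simp [Finset.Icc_eq_empty (by omega : ¬ (1:ℕ) ≤ 0)]
  | succ k ih =>
    intro hk1
    have hkn : k ≤ n := by omega
    set W : Ω → ℝ := fun ω => Real.exp (∑ i ∈ Finset.Icc 1 k, (l * ξ i ω - h * (ξ i ω) ^ 2))
      with hW
    have hWpos : ∀ ω, 0 < W ω := fun ω => Real.exp_pos _
    have hWmeas : StronglyMeasurable[ℱ k] W := hmeas k hkn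
    have hWint : Integrable W μ := hint k hkn
    have hξint : Integrable (ξ (k + 1)) μ :=
      (hsq (k + 1) (by omega) hk1).integrable (by norm_num)
    have hprod : Integrable (fun ω => W ω * ξ (k + 1) ω) μ := by
      apply Integrable.bdd_mul (c := Real.exp (k * (1 / 2))) hξint ((hWmeas.mono (ℱ.le k)).aestronglyMeasurable)
      exact Filter.Eventually.of_forall fun ω => hbound k ω
    have hsplit : ∀ ω : Ω, ∑ i ∈ Finset.Icc 1 (k + 1), (l * ξ i ω - h * (ξ i ω) ^ 2)
        = (∑ i ∈ Finset.Icc 1 k, (l * ξ i ω - h * (ξ i ω) ^ 2))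
          + (l * ξ (k + 1) ω - h * (ξ (k + 1) ω) ^ 2) := by
      intro ω
      exact Finset.sum_Icc_succ_top (by omega) _
    have hae : ∀ᵐ ω ∂μ, Real.exp (∑ i ∈ Finset.Icc 1 (k + 1), (l * ξ i ω - h * (ξ i ω) ^ 2))
        ≤ W ω + l * (W ω * ξ (k + 1) ω) := by
      filter_upwards [hbdd (k + 1) (by omega) hk1] with ω hω
      rw [hsplit ω, Real.exp_add]
      calc W ω * Real.exp (l * ξ (k + 1) ω - h * (ξ (k + 1) ω) ^ 2)
          ≤ W ω * (1 + l * ξ (k + 1) ω) :=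
            mul_le_mul_of_nonneg_left (hkey (ξ (k + 1) ω) hω) (hWpos ω).le
        _ = W ω + l * (W ω * ξ (k + 1) ω) := by ring
    have hrhs_int : Integrable (fun ω => W ω + l * (W ω * ξ (k + 1) ω)) μ :=
      hWint.add (hprod.const_mul l)
    have hzero : ∫ ω, W ω * ξ (k + 1) ω ∂μ = 0 := by
      have hc : μ[ξ (k + 1) | ℱ k] =ᵐ[μ] 0 := by
        have := hcond (k + 1) (by omega) hk1
        simpa using this
      have hpull : μ[fun ω => W ω * ξ (k + 1) ω | ℱ k]
          =ᵐ[μ] fun ω => W ω * (μ[ξ (k + 1) | ℱ k]) ω :=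
        condExp_mul_of_stronglyMeasurable_left hWmeas hprod hξint
      have hz : μ[fun ω => W ω * ξ (k + 1) ω | ℱ k] =ᵐ[μ] 0 := by
        filter_upwards [hpull, hc] with ω h1 h2
        simp [h1, h2]
      calc ∫ ω, W ω * ξ (k + 1) ω ∂μ
          = ∫ ω, (μ[fun ω => W ω * ξ (k + 1) ω | ℱ k]) ω ∂μ :=
            (integral_condExp (ℱ.le k)).symm
        _ = ∫ ω, (0:ℝ) ∂μ := integral_congr_ae hz
        _ = 0 := by simp
    calc ∫ ω, Real.exp (∑ i ∈ Finset.Icc 1 (k + 1), (l * ξ i ω - h * (ξ i ω) ^ 2)) ∂μ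
        ≤ ∫ ω, (W ω + l * (W ω * ξ (k + 1) ω)) ∂μ :=
          integral_mono_ae (hint (k + 1) hk1) hrhs_int hae
      _ = ∫ ω, W ω ∂μ + l * ∫ ω, W ω * ξ (k + 1) ω ∂μ := by
          rw [integral_add hWint (hprod.const_mul l), integral_const_mul]
      _ ≤ 1 := by
          rw [hzero]
          simpa using ih hkn

end Aux

/-- Bernstein-type inequality for self-normalized martingales: for `x, y > 0`,
`P(S_n ≥ x[S]_n, [S]_n ≥ y) ≤ exp{-(x - log(1+x))y} ≤ exp{-x²y/(2(1+x))}`. -/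
theorem selfNormalized_bernstein_two_sided {Ω : Type*} {m0 : MeasurableSpace Ω}
    (μ : Measure Ω) [IsProbabilityMeasure μ] (n : ℕ) (ℱ : Filtration ℕ m0)
    (ξ : ℕ → Ω → ℝ)
    (hadapted : ∀ i, 1 ≤ i → i ≤ n → StronglyMeasurable[ℱ i] (ξ i))
    (hsq : ∀ i, 1 ≤ i → i ≤ n → MemLp (ξ i) 2 μ)
    (hcond : ∀ i, 1 ≤ i → i ≤ n → μ[ξ i | ℱ (i - 1)] =ᵐ[μ] 0)
    (hbdd : ∀ i, 1 ≤ i → i ≤ n → ∀ᵐ ω ∂μ, -1 ≤ ξ i ω)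
    (x y : ℝ) (hx : 0 < x) (hy : 0 < y) :
    (μ {ω | x * ∑ i ∈ Finset.Icc 1 n, (ξ i ω) ^ 2 ≤ ∑ i ∈ Finset.Icc 1 n, ξ i ω ∧
        y ≤ ∑ i ∈ Finset.Icc 1 n, (ξ i ω) ^ 2}).toReal ≤
      Real.exp (-(x - Real.log (1 + x)) * y) ∧
    Real.exp (-(x - Real.log (1 + x)) * y) ≤ Real.exp (-(x ^ 2 * y) / (2 * (1 + x))) := by
  have h1x : (0:ℝ) < 1 + x := by linarith
  set l : ℝ := x / (1 + x) with hl
  set h : ℝ := -l - Real.log (1 - l) with hh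
  have hl0 : 0 < l := by positivity
  have hl1 : l < 1 := by
    rw [hl, div_lt_one h1x]
    linarith
  have hsub : 1 - l = (1 + x)⁻¹ := by
    rw [hl]
    field_simp
    ring
  have hlog : Real.log (1 - l) = -Real.log (1 + x) := by
    rw [hsub, Real.log_inv]
  have hhalf : l ^ 2 / 2 ≤ h := by
    rw [hh]
    have := bern_half_le hl0.le hl1
    linarith
  have hkey : ∀ u : ℝ, -1 ≤ u → Real.exp (l * u - h * u ^ 2) ≤ 1 + l * u :=
    fun u hu => bern_keyA hl0 hl1 hu
  set c : ℝ := x - Real.log (1 + x) with hc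
  have hcl : l * x - h = c := by
    rw [hc, hh, hlog, hl]
    field_simp
    ring
  have hc0 : 0 ≤ c := by
    have := Real.log_le_sub_one_of_pos h1x
    rw [hc]
    linarith
  have hint := bern_integral_exp_le μ n ℱ ξ hadapted hsq hcond hbdd hhalf hkey n le_rfl
  have hint_int : Integrable
      (fun ω => Real.exp (∑ i ∈ Finset.Icc 1 n, (l * ξ i ω - h * (ξ i ω) ^ 2))) μ := by
    have hterm : ∀ u : ℝ, l * u - h * u ^ 2 ≤ 1 / 2 := by
      intro u
      nlinarith [sq_nonneg (l * u - 1), sq_nonneg u]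
    have hmeas : StronglyMeasurable[ℱ n]
        (fun ω => Real.exp (∑ i ∈ Finset.Icc 1 n, (l * ξ i ω - h * (ξ i ω) ^ 2))) := by
      apply Real.continuous_exp.comp_stronglyMeasurable
      apply Finset.stronglyMeasurable_fun_sum
      intro i hi
      rw [Finset.mem_Icc] at hi
      have hsm : StronglyMeasurable[ℱ n] (ξ i) :=
        (hadapted i hi.1 hi.2).mono (ℱ.mono hi.2)
      have e : (fun ω => l * ξ i ω - h * (ξ i ω) ^ 2)
          = fun ω => l * ξ i ω - h * (ξ i ω * ξ i ω) := by
        funext ω; ring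
      rw [e]
      exact (hsm.const_mul l).sub ((hsm.mul hsm).const_mul h)
    refine (memLp_top_of_bound ((hmeas.mono (ℱ.le n)).aestronglyMeasurable)
      (Real.exp (n * (1 / 2))) (Filter.Eventually.of_forall fun ω => ?_)).integrable le_top
    rw [Real.norm_eq_abs, Real.abs_exp, Real.exp_le_exp]
    calc ∑ i ∈ Finset.Icc 1 n, (l * ξ i ω - h * (ξ i ω) ^ 2)
        ≤ ∑ i ∈ Finset.Icc 1 n, (1 / 2 : ℝ) :=
          Finset.sum_le_sum (fun i _ => hterm (ξ i ω))
      _ ≤ n * (1 / 2) := by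
          rw [Finset.sum_const, Nat.card_Icc]
          simp
  constructor
  · -- Markov's inequality step
    have hmarkov := mul_meas_ge_le_integral_of_nonneg
      (f := fun ω => Real.exp (∑ i ∈ Finset.Icc 1 n, (l * ξ i ω - h * (ξ i ω) ^ 2)))
      (μ := μ)
      (Filter.Eventually.of_forall (fun ω => (Real.exp_pos _).le))
      hint_int
      (Real.exp (c * y))
    have hsubset : {ω | x * ∑ i ∈ Finset.Icc 1 n, (ξ i ω) ^ 2 ≤ ∑ i ∈ Finset.Icc 1 n, ξ i ω ∧
          y ≤ ∑ i ∈ Finset.Icc 1 n, (ξ i ω) ^ 2}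
        ⊆ {ω | Real.exp (c * y)
            ≤ Real.exp (∑ i ∈ Finset.Icc 1 n, (l * ξ i ω - h * (ξ i ω) ^ 2))} := by
      intro ω hω
      obtain ⟨hω1, hω2⟩ := hω
      simp only [Set.mem_setOf_eq]
      rw [Real.exp_le_exp]
      have hsum : ∑ i ∈ Finset.Icc 1 n, (l * ξ i ω - h * (ξ i ω) ^ 2)
          = l * (∑ i ∈ Finset.Icc 1 n, ξ i ω) - h * (∑ i ∈ Finset.Icc 1 n, (ξ i ω) ^ 2) := by
        rw [Finset.sum_sub_distrib, Finset.mul_sum, Finset.mul_sum]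
      rw [hsum]
      set Q : ℝ := ∑ i ∈ Finset.Icc 1 n, (ξ i ω) ^ 2
      set S : ℝ := ∑ i ∈ Finset.Icc 1 n, ξ i ω
      have hQ0 : 0 ≤ Q := le_trans hy.le hω2
      nlinarith [mul_le_mul_of_nonneg_left hω1 hl0.le, mul_le_mul_of_nonneg_left hω2 hc0]
    have htr : (μ {ω | x * ∑ i ∈ Finset.Icc 1 n, (ξ i ω) ^ 2 ≤ ∑ i ∈ Finset.Icc 1 n, ξ i ω ∧
          y ≤ ∑ i ∈ Finset.Icc 1 n, (ξ i ω) ^ 2}).toReal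
        ≤ (μ {ω | Real.exp (c * y)
            ≤ Real.exp (∑ i ∈ Finset.Icc 1 n, (l * ξ i ω - h * (ξ i ω) ^ 2))}).toReal :=
      ENNReal.toReal_mono (measure_ne_top μ _) (measure_mono hsubset)
    have hle1 : Real.exp (c * y) * (μ {ω | Real.exp (c * y)
        ≤ Real.exp (∑ i ∈ Finset.Icc 1 n, (l * ξ i ω - h * (ξ i ω) ^ 2))}).toReal ≤ 1 :=
      le_trans hmarkov hint
    have hexp : Real.exp (-(x - Real.log (1 + x)) * y) = Real.exp (-(c * y)) := by
      rw [hc]; ring_nf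
    rw [hexp]
    have hinv : Real.exp (-(c * y)) * Real.exp (c * y) = 1 := by
      rw [← Real.exp_add]; simp
    nlinarith [Real.exp_pos (c * y), Real.exp_pos (-(c * y)), htr,
      ENNReal.toReal_nonneg (a := μ {ω | x * ∑ i ∈ Finset.Icc 1 n, (ξ i ω) ^ 2
        ≤ ∑ i ∈ Finset.Icc 1 n, ξ i ω ∧ y ≤ ∑ i ∈ Finset.Icc 1 n, (ξ i ω) ^ 2})]
  · rw [Real.exp_le_exp]
    have hd := bern_log_le_pade x hx.le
    have e : -(x ^ 2 * y) / (2 * (1 + x)) = -((x ^ 2 / (2 * (1 + x))) * y) := by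
      field_simp
    rw [e, neg_mul, neg_le_neg_iff]
    exact mul_le_mul_of_nonneg_right hd hy.le
end

section
/- Let (ξ_i, F_i)_{i=1..n} be a martingale difference sequence with ξ_i ≥ -1 a.s., S_n = Σξ_i, ⟨S⟩_n = Σ E[ξ_i²|F_{i-1}]. Then for all x > 0 and p > 1, P(S_n ≤ -x⟨S⟩_n) ≤ (E[exp{-(p-1)((1+x)log(1+x) - x)⟨S⟩_n}·1_{S_n ≤ -x⟨S⟩_n}])^{1/p}. -/
open MeasureTheory Real Finset

lemma exp_sub_one_sub_eq_tsum (y : ℝ) :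
    Real.exp y - 1 - y = ∑' k : ℕ, y ^ (k + 2) / (Nat.factorial (k + 2) : ℝ) := by
  have hs := Real.summable_pow_div_factorial y
  have h2 := Summable.sum_add_tsum_nat_add 2 hs
  have hexp : Real.exp y = ∑' n : ℕ, y ^ n / (Nat.factorial n : ℝ) := by
    rw [Real.exp_eq_exp_ℝ, NormedSpace.exp_eq_tsum_div]
  rw [Finset.sum_range_succ, Finset.sum_range_one] at h2
  simp only [pow_zero, Nat.factorial_zero, pow_one, Nat.factorial_one, Nat.cast_one] at h2
  rw [hexp, ← h2]
  ring

set_option maxHeartbeats 1000000 in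
lemma exp_taylor2_mono {t c : ℝ} (ht : 0 ≤ t) (htc : t ≤ c) :
    c ^ 2 * (Real.exp t - 1 - t) ≤ t ^ 2 * (Real.exp c - 1 - c) := by
  have hst : Summable fun k : ℕ => t ^ (k + 2) / (Nat.factorial (k + 2) : ℝ) :=
    (summable_nat_add_iff 2).2 (Real.summable_pow_div_factorial t)
  have hsc : Summable fun k : ℕ => c ^ (k + 2) / (Nat.factorial (k + 2) : ℝ) :=
    (summable_nat_add_iff 2).2 (Real.summable_pow_div_factorial c)
  rw [exp_sub_one_sub_eq_tsum, exp_sub_one_sub_eq_tsum, ← tsum_mul_left, ← tsum_mul_left]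
  refine Summable.tsum_le_tsum (fun k => ?_) (hst.mul_left _) (hsc.mul_left _)
  have h1 : t ^ k ≤ c ^ k := pow_le_pow_left₀ ht htc k
  have h2 : (0:ℝ) < (Nat.factorial (k + 2) : ℝ) := by positivity
  have e1 : c ^ 2 * (t ^ (k + 2) / (Nat.factorial (k + 2) : ℝ))
      = (c ^ 2 * t ^ 2 * t ^ k) / (Nat.factorial (k + 2) : ℝ) := by rw [pow_add]; ring
  have e2 : t ^ 2 * (c ^ (k + 2) / (Nat.factorial (k + 2) : ℝ))
      = (c ^ 2 * t ^ 2 * c ^ k) / (Nat.factorial (k + 2) : ℝ) := by rw [pow_add]; ring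
  rw [e1, e2]
  gcongr

lemma exp_le_quadratic_of_nonpos {t : ℝ} (ht : t ≤ 0) :
    Real.exp t ≤ 1 + t + t ^ 2 / 2 := by
  obtain ⟨s, hs0, rfl⟩ : ∃ s, 0 ≤ s ∧ t = -s := ⟨-t, by linarith, by ring⟩
  have h1 : 1 + s + s ^ 2 / 2 ≤ Real.exp s := by
    have := Real.sum_le_exp_of_nonneg hs0 3
    rw [Finset.sum_range_succ, Finset.sum_range_succ, Finset.sum_range_one] at this
    simp only [pow_zero, Nat.factorial_zero, pow_one, Nat.factorial_one] at this
    norm_num at this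
    linarith
  have hnn : 0 ≤ 1 - s + s ^ 2 / 2 := by nlinarith [sq_nonneg (s - 1)]
  rw [Real.exp_neg, inv_le_iff_one_le_mul₀ (Real.exp_pos s)]
  nlinarith [mul_le_mul_of_nonneg_right h1 hnn]

lemma exp_taylor2_mono' {t c : ℝ} (hc : 0 < c) (htc : t ≤ c) :
    c ^ 2 * (Real.exp t - 1 - t) ≤ t ^ 2 * (Real.exp c - 1 - c) := by
  rcases le_or_gt t 0 with h | h
  · have h1 := exp_le_quadratic_of_nonpos h
    have hψ : c ^ 2 / 2 ≤ Real.exp c - 1 - c := by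
      have := Real.sum_le_exp_of_nonneg hc.le 3
      rw [Finset.sum_range_succ, Finset.sum_range_succ, Finset.sum_range_one] at this
      simp only [pow_zero, Nat.factorial_zero, pow_one, Nat.factorial_one] at this
      norm_num at this
      linarith
    have hA : c ^ 2 * (Real.exp t - 1 - t) ≤ c ^ 2 * (t ^ 2 / 2) :=
      mul_le_mul_of_nonneg_left (by linarith) (by positivity)
    have hB : c ^ 2 * (t ^ 2 / 2) = t ^ 2 * (c ^ 2 / 2) := by ring
    have hC : t ^ 2 * (c ^ 2 / 2) ≤ t ^ 2 * (Real.exp c - 1 - c) :=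
      mul_le_mul_of_nonneg_left hψ (sq_nonneg t)
    linarith
  · exact exp_taylor2_mono h.le htc

lemma key_exp_ineq {c u : ℝ} (hc : 0 < c) (hu : -1 ≤ u) :
    Real.exp (-(c * u)) ≤ 1 - c * u + (Real.exp c - 1 - c) * u ^ 2 := by
  have htc : -(c * u) ≤ c := by nlinarith
  have key := exp_taylor2_mono' hc htc
  have hc2 : (0:ℝ) < c ^ 2 := by positivity
  have key2 : Real.exp (-(c * u)) - 1 - (-(c * u)) ≤ u ^ 2 * (Real.exp c - 1 - c) := by
    have h3 : c ^ 2 * (Real.exp (-(c * u)) - 1 - (-(c * u)))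
        ≤ c ^ 2 * (u ^ 2 * (Real.exp c - 1 - c)) := by nlinarith [key]
    exact le_of_mul_le_mul_left h3 hc2
  nlinarith [key2]

lemma one_add_mul_exp_neg_le_one {t : ℝ} (ht : 0 ≤ t) :
    (1 + t) * Real.exp (-t) ≤ 1 := by
  have h := Real.add_one_le_exp t
  have he := Real.exp_pos t
  rw [Real.exp_neg]
  rw [mul_inv_le_iff₀ he, one_mul]
  linarith

set_option maxHeartbeats 3200000 in
/-- Bernstein-type inequality for normalized martingales: for `x > 0` and `p > 1`,
`P(S_n ≤ -x⟨S⟩_n) ≤ (E[exp{-(p-1)((1+x)log(1+x) - x)⟨S⟩_n} 1_{S_n ≤ -x⟨S⟩_n}])^{1/p}`,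
where `⟨S⟩_n = Σ_i E[ξ_i² | F_{i-1}]`. -/
theorem normalized_bernstein_left {Ω : Type*} {m0 : MeasurableSpace Ω} (μ : Measure Ω)
    [IsProbabilityMeasure μ] (n : ℕ) (ℱ : Filtration ℕ m0) (ξ : ℕ → Ω → ℝ)
    (hadapted : ∀ i, 1 ≤ i → i ≤ n → StronglyMeasurable[ℱ i] (ξ i))
    (hsq : ∀ i, 1 ≤ i → i ≤ n → MemLp (ξ i) 2 μ)
    (hcond : ∀ i, 1 ≤ i → i ≤ n → μ[ξ i | ℱ (i - 1)] =ᵐ[μ] 0)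
    (hbdd : ∀ i, 1 ≤ i → i ≤ n → ∀ᵐ ω ∂μ, -1 ≤ ξ i ω)
    (x p : ℝ) (hx : 0 < x) (hp : 1 < p)
    (V : Ω → ℝ)
    (hV : ∀ ω, V ω = ∑ i ∈ Finset.Icc 1 n, (μ[(fun ω' => (ξ i ω') ^ 2) | ℱ (i - 1)]) ω) :
    (μ {ω | ∑ i ∈ Finset.Icc 1 n, ξ i ω ≤ -x * V ω}).toReal ≤
      (∫ ω, Set.indicator {ω' | ∑ i ∈ Finset.Icc 1 n, ξ i ω' ≤ -x * V ω'}
          (fun ω' => Real.exp (-(p - 1) * ((1 + x) * Real.log (1 + x) - x) * V ω'))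
          ω ∂μ) ^ (1 / p) := by
  classical
  have hx1 : (0:ℝ) < 1 + x := by linarith
  set l := Real.log (1 + x) with hl_def
  have hexp_l : Real.exp l = 1 + x := Real.exp_log hx1
  have hl_pos : 0 < l := Real.log_pos (by linarith)
  have hl_lt_x : l < x := by
    have h1 : Real.exp l < Real.exp x := by
      rw [hexp_l]
      have := Real.add_one_lt_exp (ne_of_gt hx)
      linarith
    exact Real.exp_lt_exp.mp h1
  set ψ := x - l with hψ_def
  have hψ_pos : 0 < ψ := by rw [hψ_def]; linarith
  have hψ_eq : Real.exp l - 1 - l = ψ := by rw [hexp_l, hψ_def]; ring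
  set c := (1 + x) * l - x with hc_def
  have hc_nonneg : 0 ≤ c := by
    have h1 : Real.log (1 + x)⁻¹ ≤ (1 + x)⁻¹ - 1 := Real.log_le_sub_one_of_pos (by positivity)
    rw [Real.log_inv] at h1
    have h2 : 1 - (1 + x)⁻¹ ≤ l := by rw [hl_def]; linarith
    have h3 : (1 + x) * (1 - (1 + x)⁻¹) ≤ (1 + x) * l :=
      mul_le_mul_of_nonneg_left h2 hx1.le
    have h4 : (1 + x) * (1 - (1 + x)⁻¹) = x := by field_simp; ring
    rw [hc_def]; linarith
  have hc_eq : l * x - ψ = c := by rw [hψ_def, hc_def]; ring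
  -- function definitions
  set g : ℕ → Ω → ℝ := fun i => μ[(fun ω' => (ξ i ω') ^ 2) | ℱ (i - 1)] with hg_def
  set W : ℕ → Ω → ℝ :=
    fun k ω => Real.exp (-l * (∑ i ∈ Finset.Icc 1 k, ξ i ω)
      - ψ * (∑ i ∈ Finset.Icc 1 k, g i ω)) with hW_def
  -- basic facts
  have hg_meas : ∀ i, StronglyMeasurable[ℱ (i - 1)] (g i) := fun i => stronglyMeasurable_condExp
  have hξ_int : ∀ i, 1 ≤ i → i ≤ n → Integrable (ξ i) μ := fun i h1 h2 =>
    (hsq i h1 h2).integrable one_le_two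
  have hξ2_int : ∀ i, 1 ≤ i → i ≤ n → Integrable (fun ω => (ξ i ω) ^ 2) μ := fun i h1 h2 =>
    (hsq i h1 h2).integrable_sq
  have hae : ∀ᵐ ω ∂μ, (∀ i ∈ Finset.Icc 1 n, -1 ≤ ξ i ω) ∧
      (∀ i ∈ Finset.Icc 1 n, 0 ≤ g i ω) := by
    refine Filter.Eventually.and ?_ ?_
    · rw [Filter.eventually_all_finset]
      intro i hi
      exact hbdd i (Finset.mem_Icc.mp hi).1 (Finset.mem_Icc.mp hi).2
    · rw [Filter.eventually_all_finset]
      intro i _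
      exact condExp_nonneg (Filter.Eventually.of_forall fun ω => sq_nonneg _)
  -- measurability of W k
  have hS_meas : ∀ k, k ≤ n → StronglyMeasurable[ℱ k] (fun ω => ∑ i ∈ Finset.Icc 1 k, ξ i ω) := by
    intro k hk
    apply Finset.stronglyMeasurable_fun_sum
    intro i hi
    obtain ⟨hi1, hi2⟩ := Finset.mem_Icc.mp hi
    exact (hadapted i hi1 (hi2.trans hk)).mono (ℱ.mono hi2)
  have hVg_meas : ∀ k, StronglyMeasurable[ℱ k] (fun ω => ∑ i ∈ Finset.Icc 1 k, g i ω) := by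
    intro k
    apply Finset.stronglyMeasurable_fun_sum
    intro i hi
    obtain ⟨hi1, hi2⟩ := Finset.mem_Icc.mp hi
    exact (hg_meas i).mono (ℱ.mono (by omega))
  have hW_meas : ∀ k, k ≤ n → StronglyMeasurable[ℱ k] (W k) := by
    intro k hk
    exact Real.continuous_exp.comp_stronglyMeasurable
      (((hS_meas k hk).const_mul (-l)).sub ((hVg_meas k).const_mul ψ))
  have hW_pos : ∀ k ω, 0 < W k ω := fun k ω => Real.exp_pos _
  have hW_bdd : ∀ k, k ≤ n → ∀ᵐ ω ∂μ, W k ω ≤ Real.exp (l * n) := by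
    intro k hk
    filter_upwards [hae] with ω hω
    obtain ⟨h1, h2⟩ := hω
    have hsub : Finset.Icc 1 k ⊆ Finset.Icc 1 n := Finset.Icc_subset_Icc_right hk
    have hS : -(k:ℝ) ≤ ∑ i ∈ Finset.Icc 1 k, ξ i ω := by
      have hcard : (Finset.Icc 1 k).card = k := by rw [Nat.card_Icc]; omega
      have := Finset.card_nsmul_le_sum (Finset.Icc 1 k) (fun i => ξ i ω) (-1)
        (fun i hi => h1 i (hsub hi))
      rw [hcard] at this
      simpa [nsmul_eq_mul] using this
    have hV0 : 0 ≤ ∑ i ∈ Finset.Icc 1 k, g i ω :=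
      Finset.sum_nonneg fun i hi => h2 i (hsub hi)
    rw [hW_def]
    apply Real.exp_le_exp.2
    have hkn : (k:ℝ) ≤ n := Nat.cast_le.2 hk
    have ha1 : 0 ≤ l * ((∑ i ∈ Finset.Icc 1 k, ξ i ω) + (k:ℝ)) :=
      mul_nonneg hl_pos.le (by linarith)
    have ha2 : 0 ≤ ψ * (∑ i ∈ Finset.Icc 1 k, g i ω) := mul_nonneg hψ_pos.le hV0
    have ha3 : l * (k:ℝ) ≤ l * (n:ℝ) := mul_le_mul_of_nonneg_left hkn hl_pos.le
    nlinarith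
  have hW_int : ∀ k, k ≤ n → Integrable (W k) μ := by
    intro k hk
    refine (integrable_const (Real.exp (l * n))).mono'
      (((hW_meas k hk).mono (ℱ.le k)).aestronglyMeasurable) ?_
    filter_upwards [hW_bdd k hk] with ω h
    rw [Real.norm_of_nonneg (hW_pos k ω).le]
    exact h
  -- the core supermartingale step
  have hcore : ∀ k, k + 1 ≤ n → ∫ ω, W (k + 1) ω ∂μ ≤ ∫ ω, W k ω ∂μ := by
    intro k hk1
    have hk : k ≤ n := by omega
    have h1k : 1 ≤ k + 1 := by omega
    have hg'_meas : StronglyMeasurable[ℱ k] (g (k + 1)) := hg_meas (k + 1)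
    have hg'_nonneg : 0 ≤ᵐ[μ] g (k + 1) :=
      condExp_nonneg (Filter.Eventually.of_forall fun ω => sq_nonneg _)
    have hξ'_bdd : ∀ᵐ ω ∂μ, -1 ≤ ξ (k + 1) ω := hbdd (k + 1) h1k hk1
    have hξ'_int : Integrable (ξ (k + 1)) μ := hξ_int _ h1k hk1
    have hξ'2_int : Integrable (fun ω => (ξ (k + 1) ω) ^ 2) μ := hξ2_int _ h1k hk1
    have hξ'_meas : StronglyMeasurable (ξ (k + 1)) :=
      (hadapted (k + 1) h1k hk1).mono (ℱ.le _)
    set E : Ω → ℝ := fun ω => Real.exp (-l * ξ (k + 1) ω) with hE_def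
    have hE_meas : StronglyMeasurable E :=
      Real.continuous_exp.comp_stronglyMeasurable (hξ'_meas.const_mul (-l))
    have hE_bdd : ∀ᵐ ω ∂μ, E ω ≤ Real.exp l := by
      filter_upwards [hξ'_bdd] with ω h
      apply Real.exp_le_exp.2
      nlinarith [mul_nonneg hl_pos.le (by linarith : (0:ℝ) ≤ 1 + ξ (k + 1) ω)]
    have hE_pos : ∀ ω, 0 < E ω := fun ω => Real.exp_pos _
    have hE_int : Integrable E μ := by
      refine (integrable_const (Real.exp l)).mono' hE_meas.aestronglyMeasurable ?_
      filter_upwards [hE_bdd] with ω h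
      rw [Real.norm_of_nonneg (hE_pos ω).le]; exact h
    set U : Ω → ℝ := fun ω => W k ω * Real.exp (-ψ * g (k + 1) ω) with hU_def
    have hU_meas : StronglyMeasurable[ℱ k] U :=
      (hW_meas k hk).mul
        (Real.continuous_exp.comp_stronglyMeasurable (hg'_meas.const_mul (-ψ)))
    have hU_pos : ∀ ω, 0 < U ω := fun ω => mul_pos (hW_pos k ω) (Real.exp_pos _)
    have hU_bdd : ∀ᵐ ω ∂μ, U ω ≤ Real.exp (l * n) := by
      filter_upwards [hW_bdd k hk, hg'_nonneg] with ω h1 h2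
      have : Real.exp (-ψ * g (k + 1) ω) ≤ 1 := by
        rw [show (1:ℝ) = Real.exp 0 by simp]
        apply Real.exp_le_exp.2
        nlinarith [mul_nonneg hψ_pos.le h2]
      calc U ω ≤ W k ω * 1 := mul_le_mul_of_nonneg_left this (hW_pos k ω).le
        _ = W k ω := mul_one _
        _ ≤ Real.exp (l * n) := h1
    have hUE_eq : ∀ ω, W (k + 1) ω = U ω * E ω := by
      intro ω
      rw [hW_def, hU_def, hE_def]
      simp only
      rw [Finset.sum_Icc_succ_top (by omega : 1 ≤ k + 1),
        Finset.sum_Icc_succ_top (by omega : 1 ≤ k + 1), ← Real.exp_add, ← Real.exp_add]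
      congr 1
      ring
    have hUE_int : Integrable (fun ω => U ω * E ω) μ :=
      (hW_int (k + 1) hk1).congr (Filter.Eventually.of_forall hUE_eq)
    -- conditional expectation bound
    have hcond_bound : μ[E | ℱ k] ≤ᵐ[μ] fun ω => 1 + ψ * g (k + 1) ω := by
      have hptw : E ≤ᵐ[μ] fun ω => 1 - l * ξ (k + 1) ω + ψ * (ξ (k + 1) ω) ^ 2 := by
        filter_upwards [hξ'_bdd] with ω h
        have h2 := key_exp_ineq hl_pos h
        rw [hψ_eq] at h2
        rw [hE_def]
        simp only
        rw [neg_mul]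
        linarith [h2]
      have hrhs_int : Integrable (fun ω => 1 - l * ξ (k + 1) ω + ψ * (ξ (k + 1) ω) ^ 2) μ :=
        ((integrable_const (1:ℝ)).sub (hξ'_int.const_mul l)).add (hξ'2_int.const_mul ψ)
      refine (condExp_mono hE_int hrhs_int hptw).trans (Filter.EventuallyEq.le ?_)
      have hint1 : Integrable ((fun _ => (1:ℝ)) - l • ξ (k + 1)) μ :=
        (integrable_const (1:ℝ)).sub (hξ'_int.const_mul l)
      have hint2 : Integrable (ψ • fun ω => (ξ (k + 1) ω) ^ 2) μ :=
        hξ'2_int.const_mul ψ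
      have hfun : (fun ω => 1 - l * ξ (k + 1) ω + ψ * (ξ (k + 1) ω) ^ 2)
          = ((fun _ => (1:ℝ)) - l • ξ (k + 1)) + (ψ • fun ω => (ξ (k + 1) ω) ^ 2) := rfl
      rw [hfun]
      have e1 := condExp_add (μ := μ) (m := ℱ k) hint1 hint2
      have e2 := condExp_sub (μ := μ) (m := ℱ k) (integrable_const (1:ℝ))
        (show Integrable (l • ξ (k + 1)) μ from hξ'_int.const_mul l)
      have e3 := condExp_smul (μ := μ) (m := ℱ k) l (ξ (k + 1))
      have e4 := condExp_smul (μ := μ) (m := ℱ k) ψ (fun ω => (ξ (k + 1) ω) ^ 2)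
      have e5 : μ[ξ (k + 1) | ℱ k] =ᵐ[μ] 0 := hcond (k + 1) h1k hk1
      have e7 : μ[(fun _ => (1:ℝ)) | ℱ k] = fun _ => (1:ℝ) := condExp_const (ℱ.le k) 1
      have e6 : g (k + 1) = μ[(fun ω => (ξ (k + 1) ω) ^ 2) | ℱ k] := rfl
      filter_upwards [e1, e2, e3, e4, e5] with ω w1 w2 w3 w4 w5
      simp only [Pi.add_apply, Pi.sub_apply, Pi.smul_apply, smul_eq_mul, Pi.zero_apply]
        at w1 w2 w3 w4 w5 ⊢
      rw [w1, w2, w3, w4, w5, e7, ← e6]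
      simp
    have hcondE_nonneg : 0 ≤ᵐ[μ] μ[E | ℱ k] :=
      condExp_nonneg (Filter.Eventually.of_forall fun ω => (hE_pos ω).le)
    have hcondE_meas : StronglyMeasurable[ℱ k] (μ[E | ℱ k]) := stronglyMeasurable_condExp
    have hprod1_int : Integrable (fun ω => U ω * (μ[E | ℱ k]) ω) μ := by
      refine (integrable_const (Real.exp (l * n) * (Real.exp l))).mono'
        ((hU_meas.mono (ℱ.le k)).mul (hcondE_meas.mono (ℱ.le k))).aestronglyMeasurable ?_
      have hcondE_bdd : ∀ᵐ ω ∂μ, (μ[E | ℱ k]) ω ≤ Real.exp l := by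
        have := condExp_mono (m := ℱ k) hE_int (integrable_const (Real.exp l))
          (hE_bdd : E ≤ᵐ[μ] fun _ => Real.exp l)
        filter_upwards [this] with ω h
        rw [condExp_const (ℱ.le k)] at h
        exact h
      filter_upwards [hU_bdd, hcondE_nonneg, hcondE_bdd] with ω h1 h2 h3
      rw [Real.norm_of_nonneg (mul_nonneg (hU_pos ω).le h2)]
      exact mul_le_mul h1 h3 h2 (Real.exp_pos _).le
    have hprod2_int : Integrable (fun ω => U ω * (1 + ψ * g (k + 1) ω)) μ := by
      refine (integrable_const (Real.exp (l * n))).mono'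
        ((hU_meas.mono (ℱ.le k)).mul
          (stronglyMeasurable_const.add
            ((hg'_meas.mono (ℱ.le k)).const_mul ψ))).aestronglyMeasurable ?_
      filter_upwards [hW_bdd k hk, hg'_nonneg] with ω h1 h2
      have hpos : 0 ≤ 1 + ψ * g (k + 1) ω := by nlinarith [mul_nonneg hψ_pos.le h2]
      rw [Real.norm_of_nonneg (mul_nonneg (hU_pos ω).le hpos)]
      have key : Real.exp (-ψ * g (k + 1) ω) * (1 + ψ * g (k + 1) ω) ≤ 1 := by
        have := one_add_mul_exp_neg_le_one (t := ψ * g (k + 1) ω) (mul_nonneg hψ_pos.le h2)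
        rw [neg_mul]
        linarith [this]
      calc U ω * (1 + ψ * g (k + 1) ω)
          = W k ω * (Real.exp (-ψ * g (k + 1) ω) * (1 + ψ * g (k + 1) ω)) := by
            rw [hU_def]; ring
        _ ≤ W k ω * 1 := mul_le_mul_of_nonneg_left key (hW_pos k ω).le
        _ = W k ω := mul_one _
        _ ≤ Real.exp (l * n) := h1
    calc ∫ ω, W (k + 1) ω ∂μ
        = ∫ ω, U ω * E ω ∂μ := integral_congr_ae (Filter.Eventually.of_forall hUE_eq)
      _ = ∫ ω, (μ[(fun ω' => U ω' * E ω') | ℱ k]) ω ∂μ := (integral_condExp (ℱ.le k)).symm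
      _ = ∫ ω, U ω * (μ[E | ℱ k]) ω ∂μ := by
          refine integral_congr_ae ?_
          have := condExp_mul_of_stronglyMeasurable_left hU_meas
            (show Integrable (U * E) μ from hUE_int) hE_int
          filter_upwards [this] with ω h
          simp only [Pi.mul_apply] at h
          exact h
      _ ≤ ∫ ω, U ω * (1 + ψ * g (k + 1) ω) ∂μ := by
          refine integral_mono_ae hprod1_int hprod2_int ?_
          filter_upwards [hcond_bound] with ω h
          exact mul_le_mul_of_nonneg_left h (hU_pos ω).le
      _ ≤ ∫ ω, W k ω ∂μ := by
          refine integral_mono_ae hprod2_int (hW_int k hk) ?_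
          filter_upwards [hg'_nonneg] with ω h2
          have key : Real.exp (-ψ * g (k + 1) ω) * (1 + ψ * g (k + 1) ω) ≤ 1 := by
            have := one_add_mul_exp_neg_le_one (t := ψ * g (k + 1) ω) (mul_nonneg hψ_pos.le h2)
            rw [neg_mul]
            linarith [this]
          calc U ω * (1 + ψ * g (k + 1) ω)
              = W k ω * (Real.exp (-ψ * g (k + 1) ω) * (1 + ψ * g (k + 1) ω)) := by
                rw [hU_def]; ring
            _ ≤ W k ω * 1 := mul_le_mul_of_nonneg_left key (hW_pos k ω).le
            _ = W k ω := mul_one _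
  -- the supermartingale property gives ∫ W n ≤ 1
  have hWn_le_one : ∫ ω, W n ω ∂μ ≤ 1 := by
    have hall : ∀ k, k ≤ n → ∫ ω, W k ω ∂μ ≤ 1 := by
      intro k
      induction k with
      | zero =>
        intro _
        have h0 : W 0 = fun _ => 1 := by
          funext ω
          rw [hW_def]
          simp
        rw [h0]
        simp
      | succ k ih =>
        intro h
        exact le_trans (hcore k h) (ih (by omega))
    exact hall n le_rfl
  -- now Hölder's inequality
  set q : ℝ := p / (p - 1) with hq_def
  have hp0 : (0:ℝ) < p := by linarith
  have hp1 : p - 1 ≠ 0 := by linarith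
  have hpq : p.HolderConjugate q := (Real.holderConjugate_iff_eq_conjExponent hp).2 hq_def
  have hq_pos : 0 < q := hpq.symm.pos
  have hq_inv : 1 / q = (p - 1) / p := by rw [hq_def, one_div_div]
  set A : Set Ω := {ω' | ∑ i ∈ Finset.Icc 1 n, ξ i ω' ≤ -x * V ω'} with hA_def
  have hV_eq : ∀ ω, V ω = ∑ i ∈ Finset.Icc 1 n, g i ω := hV
  have hV_meas : StronglyMeasurable V := by
    have : V = fun ω => ∑ i ∈ Finset.Icc 1 n, g i ω := funext hV_eq
    rw [this]
    exact (hVg_meas n).mono (ℱ.le n)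
  have hA_meas : MeasurableSet A := by
    apply measurableSet_le
    · exact ((hS_meas n le_rfl).mono (ℱ.le n)).measurable
    · exact (measurable_const.mul hV_meas.measurable)
  set F : Ω → ℝ := fun ω => Set.indicator A (fun ω' => Real.exp (-(p - 1) * c * V ω')) ω
    with hF_def
  have hF_nonneg : ∀ ω, 0 ≤ F ω := by
    intro ω
    rw [hF_def]
    apply Set.indicator_nonneg
    intro ω' _
    exact (Real.exp_pos _).le
  have hV_nonneg : ∀ᵐ ω ∂μ, 0 ≤ V ω := by
    filter_upwards [hae] with ω hω
    rw [hV_eq]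
    exact Finset.sum_nonneg fun i hi => hω.2 i hi
  have hF_le_one : ∀ᵐ ω ∂μ, F ω ≤ 1 := by
    filter_upwards [hV_nonneg] with ω h
    simp only [hF_def]
    by_cases hωA : ω ∈ A
    · rw [Set.indicator_of_mem hωA]
      have h9 : 0 ≤ (p - 1) * c * V ω :=
        mul_nonneg (mul_nonneg (by linarith) hc_nonneg) h
      calc Real.exp (-(p - 1) * c * V ω) ≤ Real.exp 0 := Real.exp_le_exp.2 (by nlinarith)
        _ = 1 := Real.exp_zero
    · rw [Set.indicator_of_notMem hωA]
      norm_num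
  have hF_meas : StronglyMeasurable F :=
    (Real.continuous_exp.comp_stronglyMeasurable
      (hV_meas.const_mul (-(p - 1) * c))).indicator hA_meas
  -- define Hölder pair
  set f1 : Ω → ℝ := fun ω => (F ω) ^ (1 / p) with hf1_def
  set g1 : Ω → ℝ := fun ω => (W n ω) ^ (1 / q) with hg1_def
  have hf1_nonneg : ∀ ω, 0 ≤ f1 ω := fun ω => Real.rpow_nonneg (hF_nonneg ω) _
  have hg1_nonneg : ∀ ω, 0 ≤ g1 ω := fun ω => Real.rpow_nonneg (hW_pos n ω).le _
  have hf1_meas : StronglyMeasurable f1 := by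
    have hcont : Continuous fun y : ℝ => y ^ (1 / p) :=
      Real.continuous_rpow_const (by positivity)
    exact hcont.comp_stronglyMeasurable hF_meas
  have hg1_meas : StronglyMeasurable g1 := by
    have hcont : Continuous fun y : ℝ => y ^ (1 / q) :=
      Real.continuous_rpow_const (by positivity)
    exact hcont.comp_stronglyMeasurable ((hW_meas n le_rfl).mono (ℱ.le n))
  have hf1_le_one : ∀ᵐ ω ∂μ, f1 ω ≤ 1 := by
    filter_upwards [hF_le_one] with ω h
    exact Real.rpow_le_one (hF_nonneg ω) h (by positivity)
  have hg1_bdd : ∀ᵐ ω ∂μ, g1 ω ≤ (Real.exp (l * n)) ^ (1 / q) := by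
    filter_upwards [hW_bdd n le_rfl] with ω h
    exact Real.rpow_le_rpow (hW_pos n ω).le h (by positivity)
  have hf1_mem : MemLp f1 (ENNReal.ofReal p) μ := by
    refine MemLp.of_bound hf1_meas.aestronglyMeasurable 1 ?_
    filter_upwards [hf1_le_one] with ω h
    rw [Real.norm_of_nonneg (hf1_nonneg ω)]; exact h
  have hg1_mem : MemLp g1 (ENNReal.ofReal q) μ := by
    refine MemLp.of_bound hg1_meas.aestronglyMeasurable ((Real.exp (l * n)) ^ (1 / q)) ?_
    filter_upwards [hg1_bdd] with ω h
    rw [Real.norm_of_nonneg (hg1_nonneg ω)]; exact h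
  have hpointwise : ∀ ω, Set.indicator A (fun _ => (1:ℝ)) ω ≤ f1 ω * g1 ω := by
    intro ω
    by_cases hωA : ω ∈ A
    · rw [Set.indicator_of_mem hωA]
      have hFω : F ω = Real.exp (-(p - 1) * c * V ω) := by
        simp only [hF_def]; exact Set.indicator_of_mem hωA _
      have hf1ω : f1 ω = Real.exp (-(p - 1) * c * V ω * (1 / p)) := by
        show (F ω) ^ (1 / p) = _
        rw [hFω, ← Real.exp_mul]
      have hWω : Real.exp (c * V ω) ≤ W n ω := by
        have hmem : ∑ i ∈ Finset.Icc 1 n, ξ i ω ≤ -x * V ω := hωA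
        have hVn : ∑ i ∈ Finset.Icc 1 n, g i ω = V ω := (hV_eq ω).symm
        show _ ≤ Real.exp (-l * (∑ i ∈ Finset.Icc 1 n, ξ i ω)
          - ψ * (∑ i ∈ Finset.Icc 1 n, g i ω))
        apply Real.exp_le_exp.2
        rw [hVn, ← hc_eq]
        nlinarith [mul_le_mul_of_nonneg_left hmem hl_pos.le]
      have hg1ω : Real.exp (c * V ω * (1 / q)) ≤ g1 ω := by
        have h' : Real.exp (c * V ω * (1 / q)) = Real.exp (c * V ω) ^ (1 / q) :=
          Real.exp_mul _ _
        show _ ≤ (W n ω) ^ (1 / q)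
        rw [h']
        exact Real.rpow_le_rpow (Real.exp_pos _).le hWω (by positivity)
      calc (1:ℝ) = Real.exp (-(p - 1) * c * V ω * (1 / p)) * Real.exp (c * V ω * (1 / q)) := by
            rw [← Real.exp_add]
            rw [show -(p - 1) * c * V ω * (1 / p) + c * V ω * (1 / q) = 0 by
              rw [hq_inv]; field_simp; ring]
            simp
        _ ≤ f1 ω * g1 ω := by
            rw [hf1ω]
            exact mul_le_mul_of_nonneg_left hg1ω (Real.exp_pos _).le
    · rw [Set.indicator_of_notMem hωA]
      exact mul_nonneg (hf1_nonneg ω) (hg1_nonneg ω)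
  have hind_int : Integrable (Set.indicator A fun _ => (1:ℝ)) μ :=
    (integrable_const (1:ℝ)).indicator hA_meas
  have hf1g1_int : Integrable (fun ω => f1 ω * g1 ω) μ := by
    refine (integrable_const ((Real.exp (l * n)) ^ (1 / q))).mono'
      (hf1_meas.mul hg1_meas).aestronglyMeasurable ?_
    filter_upwards [hf1_le_one, hg1_bdd] with ω h1 h2
    rw [Real.norm_of_nonneg (mul_nonneg (hf1_nonneg ω) (hg1_nonneg ω))]
    calc f1 ω * g1 ω ≤ 1 * ((Real.exp (l * n)) ^ (1 / q)) :=
          mul_le_mul h1 h2 (hg1_nonneg ω) zero_le_one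
      _ = (Real.exp (l * n)) ^ (1 / q) := one_mul _
  have holder := integral_mul_le_Lp_mul_Lq_of_nonneg hpq
    (Filter.Eventually.of_forall hf1_nonneg) (Filter.Eventually.of_forall hg1_nonneg)
    hf1_mem hg1_mem
  have hf1p : ∫ ω, f1 ω ^ p ∂μ = ∫ ω, F ω ∂μ := by
    refine integral_congr_ae (Filter.Eventually.of_forall fun ω => ?_)
    show ((F ω) ^ (1 / p)) ^ p = F ω
    rw [← Real.rpow_mul (hF_nonneg ω), one_div_mul_cancel (ne_of_gt hp0), Real.rpow_one]
  have hg1q : ∫ ω, g1 ω ^ q ∂μ = ∫ ω, W n ω ∂μ := by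
    refine integral_congr_ae (Filter.Eventually.of_forall fun ω => ?_)
    show ((W n ω) ^ (1 / q)) ^ q = W n ω
    rw [← Real.rpow_mul (hW_pos n ω).le, one_div_mul_cancel (ne_of_gt hq_pos), Real.rpow_one]
  have hWn_nonneg : 0 ≤ ∫ ω, W n ω ∂μ := integral_nonneg fun ω => (hW_pos n ω).le
  have hF_int_nonneg : 0 ≤ ∫ ω, F ω ∂μ := integral_nonneg hF_nonneg
  have hgq_le : (∫ ω, g1 ω ^ q ∂μ) ^ (1 / q) ≤ 1 := by
    rw [hg1q]
    exact Real.rpow_le_one hWn_nonneg hWn_le_one (by positivity)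
  calc (μ A).toReal
      = ∫ ω, Set.indicator A (fun _ => (1:ℝ)) ω ∂μ := (integral_indicator_one hA_meas).symm
    _ ≤ ∫ ω, f1 ω * g1 ω ∂μ := integral_mono hind_int hf1g1_int hpointwise
    _ ≤ (∫ ω, f1 ω ^ p ∂μ) ^ (1 / p) * (∫ ω, g1 ω ^ q ∂μ) ^ (1 / q) := holder
    _ = (∫ ω, F ω ∂μ) ^ (1 / p) * (∫ ω, g1 ω ^ q ∂μ) ^ (1 / q) := by rw [hf1p]
    _ ≤ (∫ ω, F ω ∂μ) ^ (1 / p) * 1 :=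
        mul_le_mul_of_nonneg_left hgq_le (Real.rpow_nonneg hF_int_nonneg _)
    _ = (∫ ω, F ω ∂μ) ^ (1 / p) := mul_one _
end

section
/- Let (ξ_i, F_i)_{i=1..n} be a martingale difference sequence with ξ_i ≥ -1 a.s., S_n = Σξ_i, ⟨S⟩_n = Σ E[ξ_i²|F_{i-1}]. Then for all x, y > 0, P(S_n ≤ -x⟨S⟩_n and ⟨S⟩_n ≥ y) ≤ exp{-((1+x)log(1+x) - x)·y} ≤ exp{-x²y/(2(1+x/3))}. -/
open MeasureTheory Real Finset Set


/-- Monotone-on-Ici from a pointwise derivative. -/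
lemma dlp_monoOn {a : ℝ} {f f' : ℝ → ℝ} (hd : ∀ t, a ≤ t → HasDerivAt f (f' t) t)
    (h0 : ∀ t, a ≤ t → 0 ≤ f' t) : MonotoneOn f (Set.Ici a) := by
  apply monotoneOn_of_deriv_nonneg (convex_Ici a)
  · exact fun t ht => (hd t ht).continuousAt.continuousWithinAt
  · intro t ht
    rw [interior_Ici] at ht
    exact (hd t ht.le).differentiableAt.differentiableWithinAt
  · intro t ht
    rw [interior_Ici] at ht
    rw [(hd t ht.le).deriv]
    exact h0 t ht.le

/-- `1 + u + u²/2 ≤ exp u` for `u ≥ 0`. -/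
lemma dlp_quad_le_exp {u : ℝ} (hu : 0 ≤ u) : 1 + u + u ^ 2 / 2 ≤ Real.exp u := by
  have := dlp_monoOn (a := 0) (f := fun t => Real.exp t - 1 - t - t ^ 2 / 2)
    (f' := fun t => Real.exp t - 1 - t)
    (fun t _ => by
      have h1 : HasDerivAt (fun t : ℝ => Real.exp t - 1 - t - t ^ 2 / 2)
          (Real.exp t - 0 - 1 - 2 * t ^ 1 / 2) t := by
        exact (((Real.hasDerivAt_exp t).sub (hasDerivAt_const t 1)).sub
          (hasDerivAt_id t)).sub ((hasDerivAt_pow 2 t).div_const 2)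
      simpa using h1)
    (fun t ht => by have := Real.add_one_le_exp t; simp; linarith)
  have h := this (Set.self_mem_Ici) (show u ∈ Set.Ici 0 from hu) hu
  simp at h
  linarith

/-- `exp u ≤ 1 + u + u²/2` for `u ≤ 0`. -/
lemma dlp_exp_le_quad {u : ℝ} (hu : u ≤ 0) : Real.exp u ≤ 1 + u + u ^ 2 / 2 := by
  have := dlp_monoOn (a := u) (f := fun t => Real.exp t - 1 - t - t ^ 2 / 2)
    (f' := fun t => Real.exp t - 1 - t)
    (fun t _ => by
      have h1 : HasDerivAt (fun t : ℝ => Real.exp t - 1 - t - t ^ 2 / 2)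
          (Real.exp t - 0 - 1 - 2 * t ^ 1 / 2) t := by
        exact (((Real.hasDerivAt_exp t).sub (hasDerivAt_const t 1)).sub
          (hasDerivAt_id t)).sub ((hasDerivAt_pow 2 t).div_const 2)
      simpa using h1)
    (fun t ht => by have := Real.add_one_le_exp t; simp; linarith)
  have h := this (Set.self_mem_Ici) (show (0:ℝ) ∈ Set.Ici u from hu) hu
  simp at h
  linarith

/-- `(u-1)e^u + 1 ≥ 0` for `u ≥ 0`. -/
lemma dlp_aux1 {u : ℝ} (hu : 0 ≤ u) : 0 ≤ (u - 1) * Real.exp u + 1 := by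
  have := dlp_monoOn (a := 0) (f := fun t => (t - 1) * Real.exp t + 1)
    (f' := fun t => t * Real.exp t)
    (fun t _ => by
      have h1 : HasDerivAt (fun t : ℝ => (t - 1) * Real.exp t + 1)
          (1 * Real.exp t + (t - 1) * Real.exp t) t := by
        exact (((hasDerivAt_id t).sub_const 1).mul (Real.hasDerivAt_exp t)).add_const 1
      convert h1 using 1; ring)
    (fun t ht => mul_nonneg ht (Real.exp_pos t).le)
  have h := this (Set.self_mem_Ici) (show u ∈ Set.Ici 0 from hu) hu
  simpa using h

/-- `(u-2)e^u + u + 2 ≥ 0` for `u ≥ 0`. -/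
lemma dlp_aux2 {u : ℝ} (hu : 0 ≤ u) : 0 ≤ (u - 2) * Real.exp u + u + 2 := by
  have := dlp_monoOn (a := 0) (f := fun t => (t - 2) * Real.exp t + t + 2)
    (f' := fun t => (t - 1) * Real.exp t + 1)
    (fun t _ => by
      have h1 : HasDerivAt (fun t : ℝ => (t - 2) * Real.exp t + t + 2)
          (1 * Real.exp t + (t - 2) * Real.exp t + 1) t := by
        exact ((((hasDerivAt_id t).sub_const 2).mul (Real.hasDerivAt_exp t)).add
          (hasDerivAt_id t)).add_const 2
      convert h1 using 1; ring)
    (fun t ht => dlp_aux1 ht)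
  have h := this (Set.self_mem_Ici) (show u ∈ Set.Ici 0 from hu) hu
  simpa using h

/-- Monotonicity of `u ↦ (e^u - 1 - u)/u²` on positives. -/
lemma dlp_phi_mono {u v : ℝ} (hu : 0 < u) (huv : u ≤ v) :
    (Real.exp u - 1 - u) / u ^ 2 ≤ (Real.exp v - 1 - v) / v ^ 2 := by
  have := dlp_monoOn (a := u) (f := fun t => (Real.exp t - 1 - t) / t ^ 2)
    (f' := fun t => ((Real.exp t - 1) * t ^ 2 - (Real.exp t - 1 - t) * (2 * t)) / (t ^ 2) ^ 2) ?_ ?_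
  · exact this Set.self_mem_Ici huv huv
  · intro t ht
    have ht0 : 0 < t := lt_of_lt_of_le hu ht
    have h1 : HasDerivAt (fun t : ℝ => Real.exp t - 1 - t) (Real.exp t - 0 - 1) t :=
      ((Real.hasDerivAt_exp t).sub (hasDerivAt_const t 1)).sub (hasDerivAt_id t)
    have h2 : HasDerivAt (fun t : ℝ => t ^ 2) (2 * t ^ 1) t := hasDerivAt_pow 2 t
    have := h1.div h2 (by positivity)
    refine this.congr_deriv ?_
    ring
  · intro t ht
    have ht0 : 0 < t := lt_of_lt_of_le hu ht
    apply div_nonneg _ (by positivity)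
    have key := dlp_aux2 ht0.le
    nlinarith [Real.exp_pos t]

/-- Key pointwise inequality: for `l > 0` and `t ≥ -1`,
`exp(-l t) ≤ 1 - l t + (e^l - 1 - l) t²`. -/
lemma dlp_pointwise {l t : ℝ} (hl : 0 < l) (ht : -1 ≤ t) :
    Real.exp (-l * t) ≤ 1 - l * t + (Real.exp l - 1 - l) * t ^ 2 := by
  set u := -l * t with hu
  have hul : u ≤ l := by nlinarith
  have ht2 : (Real.exp l - 1 - l) * t ^ 2 = (Real.exp l - 1 - l) * u ^ 2 / l ^ 2 := by
    field_simp [hu]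
    ring
  have hψ : l ^ 2 / 2 ≤ Real.exp l - 1 - l := by
    have := dlp_quad_le_exp hl.le
    linarith
  rcases le_or_gt u 0 with hu0 | hu0
  · have h1 := dlp_exp_le_quad hu0
    have h2 : u ^ 2 / 2 ≤ (Real.exp l - 1 - l) * u ^ 2 / l ^ 2 := by
      rw [div_le_div_iff₀ (by norm_num) (by positivity)]
      nlinarith [sq_nonneg u]
    rw [show (1 : ℝ) - l * t = 1 + u by rw [hu]; ring, ht2]
    linarith
  · have h1 := dlp_phi_mono hu0 hul
    have : Real.exp u - 1 - u ≤ (Real.exp l - 1 - l) * u ^ 2 / l ^ 2 := by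
      rw [div_le_div_iff₀ (by positivity) (by positivity)] at h1
      rw [le_div_iff₀ (by positivity)]
      linarith
    rw [show (1 : ℝ) - l * t = 1 + u by rw [hu]; ring, ht2]
    linarith

lemma dlp_log1p (t : ℝ) (ht : 0 ≤ t) : HasDerivAt (fun s : ℝ => Real.log (1 + s)) (1 / (1 + t)) t := by
  have h : HasDerivAt (fun s : ℝ => 1 + s) 1 t := by
    simpa using (hasDerivAt_id t).const_add 1
  have := (Real.hasDerivAt_log (by linarith : (1:ℝ) + t ≠ 0)).comp t h
  exact this.congr_deriv (by simp)

lemma dlp_log_lb {t : ℝ} (ht : 0 ≤ t) : t / (1 + t) ≤ Real.log (1 + t) := by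
  have h := Real.one_sub_inv_le_log_of_pos (x := 1 + t) (by linarith)
  have : t / (1 + t) = 1 - (1 + t)⁻¹ := by
    field_simp
    ring
  linarith [this ▸ h]

lemma dlp_h_nonneg {t : ℝ} (ht : 0 ≤ t) : 0 ≤ (t + 2) * Real.log (1 + t) - 2 * t := by
  have := dlp_monoOn (a := 0) (f := fun s => (s + 2) * Real.log (1 + s) - 2 * s)
    (f' := fun s => Real.log (1 + s) + (s + 2) / (1 + s) - 2) ?_ ?_
  · have h := this Set.self_mem_Ici (show t ∈ Set.Ici 0 from ht) ht
    simpa using h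
  · intro s hs
    have h1 : HasDerivAt (fun s : ℝ => (s + 2) * Real.log (1 + s) - 2 * s)
        (1 * Real.log (1 + s) + (s + 2) * (1 / (1 + s)) - 2 * 1) s := by
      exact (((hasDerivAt_id s).add_const 2).mul (dlp_log1p s hs)).sub
        ((hasDerivAt_id s).const_mul 2)
    convert h1 using 1
    field_simp
  · intro s hs
    have hlb := dlp_log_lb hs
    have : (s + 2) / (1 + s) - 2 = -(s / (1 + s)) := by
      field_simp
      ring
    linarith [this ▸ le_refl ((s + 2) / (1 + s) - 2)]

lemma dlp_g_nonneg {t : ℝ} (ht : 0 ≤ t) :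
    0 ≤ 2 * (t + 3) * ((1 + t) * Real.log (1 + t) - t) - 3 * t ^ 2 := by
  have := dlp_monoOn (a := 0)
    (f := fun s => 2 * (s + 3) * ((1 + s) * Real.log (1 + s) - s) - 3 * s ^ 2)
    (f' := fun s => (4 * s + 8) * Real.log (1 + s) - 8 * s) ?_ ?_
  · have h := this Set.self_mem_Ici (show t ∈ Set.Ici 0 from ht) ht
    simpa using h
  · intro s hs
    have hlog : HasDerivAt (fun s : ℝ => (1 + s) * Real.log (1 + s) - s)
        ((0 + 1) * Real.log (1 + s) + (1 + s) * (1 / (1 + s)) - 1) s :=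
      (((hasDerivAt_const s 1).add (hasDerivAt_id s)).mul (dlp_log1p s hs)).sub
        (hasDerivAt_id s)
    have h2 : HasDerivAt (fun s : ℝ => 2 * (s + 3)) 2 s := by
      simpa using ((hasDerivAt_id s).add_const 3).const_mul 2
    have h3 := (h2.mul hlog).sub ((hasDerivAt_pow 2 s).const_mul 3)
    refine h3.congr_deriv ?_
    have h1s : (1 : ℝ) + s ≠ 0 := by linarith
    field_simp
    ring
  · intro s hs
    show 0 ≤ (4 * s + 8) * Real.log (1 + s) - 8 * s
    have := dlp_h_nonneg hs
    nlinarith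

/-- `(1+x)log(1+x) - x ≥ x²/(2(1+x/3))` for `x > 0`. -/
lemma dlp_second {x : ℝ} (hx : 0 < x) :
    x ^ 2 / (2 * (1 + x / 3)) ≤ (1 + x) * Real.log (1 + x) - x := by
  have hg := dlp_g_nonneg hx.le
  rw [div_le_iff₀ (by positivity)]
  nlinarith

lemma dlp_key {Ω : Type*} {m0 : MeasurableSpace Ω} (μ : Measure Ω) [IsProbabilityMeasure μ]
    (n : ℕ) (ℱ : Filtration ℕ m0) (ξ : ℕ → Ω → ℝ)
    (hadapted : ∀ i, 1 ≤ i → i ≤ n → StronglyMeasurable[ℱ i] (ξ i))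
    (hsq : ∀ i, 1 ≤ i → i ≤ n → MemLp (ξ i) 2 μ)
    (hcond : ∀ i, 1 ≤ i → i ≤ n → μ[ξ i | ℱ (i - 1)] =ᵐ[μ] 0)
    (hbdd : ∀ i, 1 ≤ i → i ≤ n → ∀ᵐ ω ∂μ, -1 ≤ ξ i ω)
    (l : ℝ) (hl : 0 < l) (k : ℕ) (hk : k ≤ n) :
    Integrable (fun ω => ∏ i ∈ Finset.Icc 1 k,
      Real.exp (-l * ξ i ω - (Real.exp l - 1 - l) * (μ[fun ω' => ξ i ω' ^ 2|ℱ (i-1)]) ω)) μ ∧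
    ∫ ω, ∏ i ∈ Finset.Icc 1 k,
      Real.exp (-l * ξ i ω - (Real.exp l - 1 - l) * (μ[fun ω' => ξ i ω' ^ 2|ℱ (i-1)]) ω) ∂μ ≤ 1 := by
  have hψ0 : 0 ≤ Real.exp l - 1 - l := by have := Real.add_one_le_exp l; linarith
  set ψ : ℝ := Real.exp l - 1 - l with hψdef
  let g : ℕ → Ω → ℝ := fun i => μ[fun ω' => ξ i ω' ^ 2|ℱ (i-1)]
  let Z : ℕ → Ω → ℝ := fun j ω => ∏ i ∈ Finset.Icc 1 j,
      Real.exp (-l * ξ i ω - ψ * g i ω)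
  suffices H : ∀ j, j ≤ n → Integrable (Z j) μ ∧ ∫ ω, Z j ω ∂μ ≤ 1 from H k hk
  -- basic facts
  have hg_nn : ∀ i, (0 : Ω → ℝ) ≤ᵐ[μ] g i := fun i =>
    condExp_nonneg (Filter.Eventually.of_forall fun ω => sq_nonneg _)
  have hgmeas : ∀ i, StronglyMeasurable[ℱ (i-1)] (g i) := fun i => stronglyMeasurable_condExp
  have hZpos : ∀ j ω, 0 < Z j ω := fun j ω =>
    Finset.prod_pos fun i _ => Real.exp_pos _
  -- measurability of Z
  have hfacmeas : ∀ i, 1 ≤ i → i ≤ n →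
      StronglyMeasurable[ℱ i] (fun ω => Real.exp (-l * ξ i ω - ψ * g i ω)) := by
    intro i h1 h2
    exact Real.continuous_exp.comp_stronglyMeasurable
      ((((hadapted i h1 h2).const_mul (-l)).sub
        (((hgmeas i).mono (ℱ.mono (Nat.sub_le i 1))).const_mul ψ)))
  have hZmeas : ∀ j, j ≤ n → StronglyMeasurable[ℱ j] (Z j) := by
    intro j hj
    apply Finset.stronglyMeasurable_fun_prod
    intro i hi
    obtain ⟨h1, h2⟩ := Finset.mem_Icc.mp hi
    exact (hfacmeas i h1 (h2.trans hj)).mono (ℱ.mono h2)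
  -- a.e. bound on Z
  have hgood : ∀ᵐ ω ∂μ, ∀ i ∈ (↑(Finset.Icc 1 n) : Set ℕ), -1 ≤ ξ i ω ∧ 0 ≤ g i ω := by
    rw [ae_ball_iff (Finset.Icc 1 n : Finset ℕ).countable_toSet]
    intro i hi
    obtain ⟨h1, h2⟩ := Finset.mem_Icc.mp (Finset.mem_coe.mp hi)
    exact (hbdd i h1 h2).and (hg_nn i)
  have hZbdd : ∀ j, j ≤ n → ∀ᵐ ω ∂μ, ‖Z j ω‖ ≤ Real.exp l ^ j := by
    intro j hj
    filter_upwards [hgood] with ω hω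
    have h1 : Z j ω ≤ Real.exp l ^ j := by
      have h2 : Z j ω ≤ ∏ _i ∈ Finset.Icc 1 j, Real.exp l := by
        apply Finset.prod_le_prod (fun i _ => (Real.exp_pos _).le)
        intro i hi
        obtain ⟨hi1, hi2⟩ := Finset.mem_Icc.mp hi
        obtain ⟨hb, hgn⟩ := hω i (Finset.mem_coe.mpr (Finset.mem_Icc.mpr ⟨hi1, hi2.trans hj⟩))
        apply Real.exp_le_exp.mpr
        nlinarith
      simpa [Nat.card_Icc] using h2
    rwa [Real.norm_eq_abs, abs_of_pos (hZpos j ω)]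
  have hZint : ∀ j, j ≤ n → Integrable (Z j) μ := fun j hj =>
    ⟨((hZmeas j hj).mono (ℱ.le j)).aestronglyMeasurable,
      HasFiniteIntegral.of_bounded (hZbdd j hj)⟩
  -- induction
  intro j
  induction j with
  | zero =>
    intro _
    refine ⟨hZint 0 (Nat.zero_le n), ?_⟩
    have : Z 0 = fun _ => 1 := by
      funext ω
      simp [Z]
    rw [this]
    simp
  | succ k ih =>
    intro hk
    have hk' : k ≤ n := le_trans (Nat.le_succ k) hk
    obtain ⟨ihInt, ihLe⟩ := ih hk'
    have h1k : (1:ℕ) ≤ k + 1 := Nat.succ_le_succ (Nat.zero_le k)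
    set A : Ω → ℝ := fun ω => Z k ω * Real.exp (-ψ * g (k+1) ω) with hAdef
    set B : Ω → ℝ := fun ω => Real.exp (-l * ξ (k+1) ω) with hBdef
    have hZsucc : ∀ ω, Z (k+1) ω = A ω * B ω := by
      intro ω
      show (∏ i ∈ Finset.Icc 1 (k+1), Real.exp (-l * ξ i ω - ψ * g i ω)) = _
      rw [Finset.prod_Icc_succ_top h1k]
      show Z k ω * Real.exp (-l * ξ (k+1) ω - ψ * g (k+1) ω) = _
      rw [show -l * ξ (k+1) ω - ψ * g (k+1) ω = -ψ * g (k+1) ω + -l * ξ (k+1) ω by ring,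
        Real.exp_add]
      ring
    have hZABeq : Z (k+1) = A * B := funext fun ω => hZsucc ω
    have hABint : Integrable (A * B) μ := hZABeq ▸ hZint (k+1) hk
    have hAmeas : StronglyMeasurable[ℱ k] A := by
      apply (hZmeas k hk').mul
      exact Real.continuous_exp.comp_stronglyMeasurable ((hgmeas (k+1)).const_mul (-ψ))
    have hB_int : Integrable B μ := by
      refine ⟨?_, HasFiniteIntegral.of_bounded (C := Real.exp l) ?_⟩
      · exact (Real.continuous_exp.comp_stronglyMeasurable
          (((hadapted (k+1) h1k hk).mono (ℱ.le (k+1))).const_mul (-l))).aestronglyMeasurable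
      · filter_upwards [hbdd (k+1) h1k hk] with ω hω
        rw [Real.norm_eq_abs, abs_of_pos (Real.exp_pos _)]
        apply Real.exp_le_exp.mpr
        nlinarith
    -- the conditional expectation bound
    have hξint : Integrable (ξ (k+1)) μ := (hsq (k+1) h1k hk).integrable one_le_two
    have hξsqint : Integrable (fun ω => ξ (k+1) ω ^ 2) μ := (hsq (k+1) h1k hk).integrable_sq
    set R : Ω → ℝ := fun ω => 1 - l * ξ (k+1) ω + ψ * ξ (k+1) ω ^ 2 with hRdef
    have hR_int : Integrable R μ :=
      ((integrable_const (1:ℝ)).sub (hξint.const_mul l)).add (hξsqint.const_mul ψ)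
    have hBR : B ≤ᵐ[μ] R := by
      filter_upwards [hbdd (k+1) h1k hk] with ω hω
      exact dlp_pointwise hl hω
    have hcB : μ[B|ℱ k] ≤ᵐ[μ] μ[R|ℱ k] := condExp_mono hB_int hR_int hBR
    have hR_eq : R = ((fun _ => (1:ℝ)) - l • ξ (k+1)) + ψ • (fun ω => ξ (k+1) ω ^ 2) := by
      funext ω
      simp only [Pi.add_apply, Pi.sub_apply, Pi.smul_apply, smul_eq_mul]
      rfl
    have hcR : μ[R|ℱ k] =ᵐ[μ] fun ω => 1 + ψ * g (k+1) ω := by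
      rw [hR_eq]
      have e1 := condExp_add (m := ℱ k) (μ := μ)
        ((integrable_const (1:ℝ)).sub (hξint.smul l)) (hξsqint.smul ψ)
      have e2 := condExp_sub (m := ℱ k) (μ := μ) (integrable_const (1:ℝ)) (hξint.smul l)
      have e3 := condExp_smul (m := ℱ k) (μ := μ) l (ξ (k+1))
      have e4 : μ[ξ (k+1)|ℱ k] =ᵐ[μ] 0 := hcond (k+1) h1k hk
      have e5 := condExp_smul (m := ℱ k) (μ := μ) ψ (fun ω => ξ (k+1) ω ^ 2)
      have e6 := condExp_const (ℱ.le k) (1:ℝ) (μ := μ)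
      have e7 : μ[fun ω => ξ (k+1) ω ^ 2|ℱ k] = g (k+1) := rfl
      filter_upwards [e1, e2, e3, e4, e5] with ω h1 h2 h3 h4 h5
      rw [h1]
      simp only [Pi.add_apply, Pi.sub_apply, Pi.smul_apply, smul_eq_mul] at *
      rw [h2, h3, h5, e7]
      simp only [Pi.sub_apply, Pi.smul_apply, smul_eq_mul, Pi.zero_apply] at *
      rw [e6, h4]
      simp
    have hpull := condExp_mul_of_stronglyMeasurable_left hAmeas hABint hB_int
    have hfinal : μ[A * B|ℱ k] ≤ᵐ[μ] Z k := by
      filter_upwards [hpull, hcB, hcR, hg_nn (k+1)] with ω hp hb hr hg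
      rw [hp]
      have hA0 : 0 ≤ A ω := mul_nonneg (hZpos k ω).le (Real.exp_pos _).le
      have hb' : (μ[B|ℱ k]) ω ≤ 1 + ψ * g (k+1) ω := by
        calc (μ[B|ℱ k]) ω ≤ (μ[R|ℱ k]) ω := hb
          _ = 1 + ψ * g (k+1) ω := hr
      have hexp : 1 + ψ * g (k+1) ω ≤ Real.exp (ψ * g (k+1) ω) := by
        have := Real.add_one_le_exp (ψ * g (k+1) ω)
        linarith
      calc (A * μ[B|ℱ k]) ω = A ω * (μ[B|ℱ k]) ω := rfl
        _ ≤ A ω * Real.exp (ψ * g (k+1) ω) :=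
            mul_le_mul_of_nonneg_left (hb'.trans hexp) hA0
        _ = Z k ω * (Real.exp (-ψ * g (k+1) ω) * Real.exp (ψ * g (k+1) ω)) := by
            rw [hAdef]; ring
        _ = Z k ω := by
            rw [← Real.exp_add]
            simp
    refine ⟨hZint (k+1) hk, ?_⟩
    have hint_eq : ∫ ω, Z (k+1) ω ∂μ = ∫ ω, (μ[A * B|ℱ k]) ω ∂μ := by
      rw [hZABeq]
      exact (integral_condExp (ℱ.le k)).symm
    rw [hint_eq]
    calc ∫ ω, (μ[A * B|ℱ k]) ω ∂μ ≤ ∫ ω, Z k ω ∂μ :=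
          integral_mono_ae integrable_condExp ihInt hfinal
      _ ≤ 1 := ihLe

/-- De la Peña's Bernstein-type inequality: for `x, y > 0`,
`P(S_n ≤ -x⟨S⟩_n, ⟨S⟩_n ≥ y) ≤ exp{-((1+x)log(1+x) - x)y} ≤ exp{-x²y/(2(1+x/3))}`. -/
theorem delaPena_bernstein {Ω : Type*} {m0 : MeasurableSpace Ω} (μ : Measure Ω)
    [IsProbabilityMeasure μ] (n : ℕ) (ℱ : Filtration ℕ m0) (ξ : ℕ → Ω → ℝ)
    (hadapted : ∀ i, 1 ≤ i → i ≤ n → StronglyMeasurable[ℱ i] (ξ i))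
    (hsq : ∀ i, 1 ≤ i → i ≤ n → MemLp (ξ i) 2 μ)
    (hcond : ∀ i, 1 ≤ i → i ≤ n → μ[ξ i | ℱ (i - 1)] =ᵐ[μ] 0)
    (hbdd : ∀ i, 1 ≤ i → i ≤ n → ∀ᵐ ω ∂μ, -1 ≤ ξ i ω)
    (x y : ℝ) (hx : 0 < x) (hy : 0 < y)
    (V : Ω → ℝ)
    (hV : ∀ ω, V ω = ∑ i ∈ Finset.Icc 1 n, (μ[(fun ω' => (ξ i ω') ^ 2) | ℱ (i - 1)]) ω) :
    (μ {ω | ∑ i ∈ Finset.Icc 1 n, ξ i ω ≤ -x * V ω ∧ y ≤ V ω}).toReal ≤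
      Real.exp (-((1 + x) * Real.log (1 + x) - x) * y) ∧
    Real.exp (-((1 + x) * Real.log (1 + x) - x) * y) ≤
      Real.exp (-(x ^ 2 * y) / (2 * (1 + x / 3))) := by
  set c : ℝ := (1 + x) * Real.log (1 + x) - x with hcdef
  have hc0 : 0 ≤ c := le_trans (by positivity) (dlp_second hx)
  constructor
  · -- main inequality
    set l : ℝ := Real.log (1 + x) with hldef
    have hl : 0 < l := Real.log_pos (by linarith)
    have hexp : Real.exp l = 1 + x := Real.exp_log (by linarith)
    obtain ⟨hint, hle⟩ := dlp_key μ n ℱ ξ hadapted hsq hcond hbdd l hl n le_rfl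
    set Z : Ω → ℝ := fun ω => ∏ i ∈ Finset.Icc 1 n,
      Real.exp (-l * ξ i ω - (Real.exp l - 1 - l) * (μ[fun ω' => ξ i ω' ^ 2|ℱ (i-1)]) ω)
      with hZdef
    have hZnn : ∀ ω, 0 ≤ Z ω := fun ω =>
      (Finset.prod_pos fun i _ => Real.exp_pos _).le
    have hsub : {ω | ∑ i ∈ Finset.Icc 1 n, ξ i ω ≤ -x * V ω ∧ y ≤ V ω} ⊆
        {ω | Real.exp (c * y) ≤ Z ω} := by
      intro ω hω
      obtain ⟨h1, h2⟩ := hω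
      have hZeq : Z ω = Real.exp (∑ i ∈ Finset.Icc 1 n,
          (-l * ξ i ω - (Real.exp l - 1 - l) * (μ[fun ω' => ξ i ω' ^ 2|ℱ (i-1)]) ω)) :=
        (Real.exp_sum _ _).symm
      have hsum : (∑ i ∈ Finset.Icc 1 n,
          (-l * ξ i ω - (Real.exp l - 1 - l) * (μ[fun ω' => ξ i ω' ^ 2|ℱ (i-1)]) ω)) =
          -l * (∑ i ∈ Finset.Icc 1 n, ξ i ω) - (Real.exp l - 1 - l) * V ω := by
        rw [Finset.sum_sub_distrib, ← Finset.mul_sum, ← Finset.mul_sum, hV ω]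
      rw [Set.mem_setOf_eq, hZeq, hsum]
      apply Real.exp_le_exp.mpr
      have hψval : Real.exp l - 1 - l = x - l := by rw [hexp]; ring
      have hstep1 : l * x * V ω ≤ -l * (∑ i ∈ Finset.Icc 1 n, ξ i ω) := by nlinarith
      have hstep2 : c * V ω = l * x * V ω - (x - l) * V ω := by
        rw [hcdef]
        ring
      nlinarith
    have hmarkov := mul_meas_ge_le_integral_of_nonneg
      (Filter.Eventually.of_forall hZnn) hint (Real.exp (c * y))
    have hmono : (μ {ω | ∑ i ∈ Finset.Icc 1 n, ξ i ω ≤ -x * V ω ∧ y ≤ V ω}).toReal ≤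
        (μ {ω | Real.exp (c * y) ≤ Z ω}).toReal :=
      ENNReal.toReal_mono (measure_ne_top μ _) (measure_mono hsub)
    have h3 : Real.exp (c * y) * (μ {ω | Real.exp (c * y) ≤ Z ω}).toReal ≤ 1 :=
      hmarkov.trans hle
    have hfin : (μ {ω | Real.exp (c * y) ≤ Z ω}).toReal ≤ Real.exp (-(c * y)) := by
      rw [Real.exp_neg]
      calc (μ {ω | Real.exp (c * y) ≤ Z ω}).toReal
          = (Real.exp (c * y))⁻¹ * (Real.exp (c * y) *
              (μ {ω | Real.exp (c * y) ≤ Z ω}).toReal) := by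
            field_simp
        _ ≤ (Real.exp (c * y))⁻¹ * 1 :=
            mul_le_mul_of_nonneg_left h3 (by positivity)
        _ = (Real.exp (c * y))⁻¹ := mul_one _
    calc (μ {ω | ∑ i ∈ Finset.Icc 1 n, ξ i ω ≤ -x * V ω ∧ y ≤ V ω}).toReal
        ≤ (μ {ω | Real.exp (c * y) ≤ Z ω}).toReal := hmono
      _ ≤ Real.exp (-(c * y)) := hfin
      _ = Real.exp (-c * y) := by rw [neg_mul]
  · apply Real.exp_le_exp.mpr
    have h2 := mul_le_mul_of_nonneg_right (dlp_second hx) hy.le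
    have heq : -(x ^ 2 * y) / (2 * (1 + x / 3)) = -(x ^ 2 / (2 * (1 + x / 3)) * y) := by
      ring
    rw [heq]
    nlinarith
end
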